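/- arXiv:0906.3890 — 10 statements merged into one kernel-verified Lean document; each statement's English description precedes it below -/
import Mathlib

section
/- The set of partitions of {1,...,2k} in which every block contains the same number of odd-labeled and even-labeled elements has cardinality c_k satisfying the recursion c_k = \sum_{s=0}^{k-1} \binom{k}{s}\binom{k-1}{s} c_s, with c_0 = 1. -/
/-- `P` is a partition of `Fin m`: blocks are nonempty and every point lies in a
unique block. -/
def IsPartition {m : ℕ} (P : Finset (Finset (Fin m))) : Prop :=
  (∀ B ∈ P, B.Nonempty) ∧ ∀ x : Fin m, ∃! B, B ∈ P ∧ x ∈ B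

/-- A partition of `{1,…,2k}` (encoded as `Fin (2k)`, position `i` carrying the
label `i+1`) is balanced when every block contains as many odd labels as even
labels.  Odd label `i+1` corresponds to `i % 2 = 0`. -/
def IsBalanced {m : ℕ} (P : Finset (Finset (Fin m))) : Prop :=
  ∀ B ∈ P, (B.filter (fun x => x.val % 2 = 0)).card
    = (B.filter (fun x => x.val % 2 = 1)).card

/-- `c k` is the number of balanced partitions of `{1,…,2k}`. -/
noncomputable def c (k : ℕ) : ℕ :=
  Set.ncard {P : Finset (Finset (Fin (2 * k))) | IsPartition P ∧ IsBalanced P}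

open Finset

set_option linter.unusedSectionVars false

variable {α : Type*} [DecidableEq α] {β : Type*} [DecidableEq β]

theorem card_filter_one_iff {P : Finset (Finset α)} {q : Finset α → Prop} [DecidablePred q] :
    (P.filter q).card = 1 ↔ ∃! B, B ∈ P ∧ q B := by
  rw [Finset.card_eq_one]
  constructor
  · rintro ⟨B, hB⟩
    have hBm : B ∈ P.filter q := hB ▸ Finset.mem_singleton_self B
    rw [Finset.mem_filter] at hBm
    refine ⟨B, hBm, ?_⟩
    intro C hC
    have : C ∈ P.filter q := Finset.mem_filter.2 hC
    rw [hB, Finset.mem_singleton] at this; exact this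
  · rintro ⟨B, hB, hu⟩
    refine ⟨B, ?_⟩
    ext C
    simp only [Finset.mem_filter, Finset.mem_singleton]
    constructor
    · intro h; exact hu C h
    · rintro rfl; exact hB

/-- The finset of balanced partitions of the finset `S`. -/
def BPF (par : α → Bool) (S : Finset α) : Finset (Finset (Finset α)) :=
  S.powerset.powerset.filter (fun P =>
    (∀ B ∈ P, B.Nonempty) ∧ (∀ x ∈ S, (P.filter (fun B => x ∈ B)).card = 1) ∧
    ∀ B ∈ P, (B.filter (fun x => par x)).card = (B.filter (fun x => ¬ par x)).card)

theorem mem_BPF {par : α → Bool} {S : Finset α} {P : Finset (Finset α)} :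
    P ∈ BPF par S ↔ (∀ B ∈ P, B ⊆ S) ∧ (∀ B ∈ P, B.Nonempty) ∧
      (∀ x ∈ S, ∃! B, B ∈ P ∧ x ∈ B) ∧
      ∀ B ∈ P, (B.filter (fun x => par x)).card = (B.filter (fun x => ¬ par x)).card := by
  simp only [BPF, Finset.mem_filter, Finset.mem_powerset]
  constructor
  · rintro ⟨hsub, h1, h2, h3⟩
    exact ⟨fun B hB => Finset.mem_powerset.1 (hsub hB), h1,
      fun x hx => card_filter_one_iff.1 (h2 x hx), h3⟩
  · rintro ⟨hsub, h1, h2, h3⟩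
    exact ⟨fun B hB => Finset.mem_powerset.2 (hsub B hB), h1,
      fun x hx => card_filter_one_iff.2 (h2 x hx), h3⟩

theorem filter_image_eq {f : α → β} {B : Finset α} {q : β → Prop} [DecidablePred q]
    {q' : α → Prop} [DecidablePred q'] (h : ∀ x ∈ B, q (f x) ↔ q' x) :
    (B.image f).filter q = (B.filter q').image f := by
  rw [Finset.filter_image]
  congr 1
  exact Finset.filter_congr (by simpa using h)

theorem BPF_card_transfer (par : α → Bool) (par' : β → Bool) (f : α → β) (S : Finset α)
    (hinj : Set.InjOn f S) (hpar : ∀ x ∈ S, par' (f x) = par x) :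
    (BPF par S).card = (BPF par' (S.image f)).card := by
  -- injectivity on blocks
  have blockinj : ∀ B ⊆ S, ∀ C ⊆ S, B.image f = C.image f → B = C := by
    intro B hB C hC h
    ext x
    constructor
    · intro hx
      have : f x ∈ C.image f := h ▸ Finset.mem_image_of_mem f hx
      obtain ⟨x', hx', hfx⟩ := Finset.mem_image.1 this
      rwa [← hinj (hC hx') (hB hx) hfx]
    · intro hx
      have : f x ∈ B.image f := h ▸ Finset.mem_image_of_mem f hx
      obtain ⟨x', hx', hfx⟩ := Finset.mem_image.1 this
      rwa [← hinj (hB hx') (hC hx) hfx]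
  have balcard : ∀ B ⊆ S,
      ((B.image f).filter (fun y => par' y)).card = (B.filter (fun x => par x)).card ∧
      ((B.image f).filter (fun y => ¬ par' y)).card = (B.filter (fun x => ¬ par x)).card := by
    intro B hB
    constructor
    · rw [filter_image_eq (fun x hx => by rw [hpar x (hB hx)])]
      exact Finset.card_image_of_injOn (hinj.mono (fun x hx => hB (Finset.mem_of_mem_filter x hx)))
    · rw [filter_image_eq (q' := fun x => ¬ par x) (fun x hx => by rw [hpar x (hB hx)])]
      exact Finset.card_image_of_injOn (hinj.mono (fun x hx => hB (Finset.mem_of_mem_filter x hx)))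
  apply Finset.card_bij (fun P _ => P.image (Finset.image f))
  · -- maps to
    intro P hP
    obtain ⟨hsub, hne, hcov, hbal⟩ := mem_BPF.1 hP
    refine mem_BPF.2 ⟨?_, ?_, ?_, ?_⟩
    · rintro B' hB'
      obtain ⟨B, hB, rfl⟩ := Finset.mem_image.1 hB'
      exact Finset.image_subset_image (hsub B hB)
    · rintro B' hB'
      obtain ⟨B, hB, rfl⟩ := Finset.mem_image.1 hB'
      exact (hne B hB).image f
    · rintro y hy
      obtain ⟨x, hx, rfl⟩ := Finset.mem_image.1 hy
      obtain ⟨B, ⟨hBP, hxB⟩, huniq⟩ := hcov x hx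
      refine ⟨B.image f, ⟨Finset.mem_image_of_mem _ hBP, Finset.mem_image_of_mem f hxB⟩, ?_⟩
      rintro C' ⟨hC', hfx⟩
      obtain ⟨C, hC, rfl⟩ := Finset.mem_image.1 hC'
      obtain ⟨x', hx', hfx'⟩ := Finset.mem_image.1 hfx
      have hxx : x' = x := hinj (hsub C hC hx') hx hfx'
      subst hxx
      rw [huniq C ⟨hC, hx'⟩]
    · rintro B' hB'
      obtain ⟨B, hB, rfl⟩ := Finset.mem_image.1 hB'
      obtain ⟨h1, h2⟩ := balcard B (hsub B hB)
      rw [h1, h2]; exact hbal B hB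
  · -- injective
    intro P1 hP1 P2 hP2 h
    obtain ⟨hsub1, -, -, -⟩ := mem_BPF.1 hP1
    obtain ⟨hsub2, -, -, -⟩ := mem_BPF.1 hP2
    ext B
    constructor
    · intro hB
      have : B.image f ∈ P2.image (Finset.image f) := h ▸ Finset.mem_image_of_mem _ hB
      obtain ⟨C, hC, hCB⟩ := Finset.mem_image.1 this
      rwa [blockinj C (hsub2 C hC) B (hsub1 B hB) hCB] at hC
    · intro hB
      have : B.image f ∈ P1.image (Finset.image f) := h ▸ Finset.mem_image_of_mem _ hB
      obtain ⟨C, hC, hCB⟩ := Finset.mem_image.1 this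
      rwa [blockinj C (hsub1 C hC) B (hsub2 B hB) hCB] at hC
  · -- surjective
    intro Q hQ
    obtain ⟨hsub, hne, hcov, hbal⟩ := mem_BPF.1 hQ
    set g : Finset β → Finset α := fun B' => S.filter (fun x => f x ∈ B') with hg
    have hback : ∀ B' ∈ Q, (g B').image f = B' := by
      intro B' hB'
      ext y
      simp only [g, Finset.mem_image, Finset.mem_filter]
      constructor
      · rintro ⟨x, ⟨-, hfx⟩, rfl⟩; exact hfx
      · intro hy
        obtain ⟨x, hx, rfl⟩ := Finset.mem_image.1 (hsub B' hB' hy)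
        exact ⟨x, ⟨hx, hy⟩, rfl⟩
    refine ⟨Q.image g, ?_, ?_⟩
    · refine mem_BPF.2 ⟨?_, ?_, ?_, ?_⟩
      · rintro B hB
        obtain ⟨B', hB', rfl⟩ := Finset.mem_image.1 hB
        exact Finset.filter_subset _ _
      · rintro B hB
        obtain ⟨B', hB', rfl⟩ := Finset.mem_image.1 hB
        obtain ⟨y, hy⟩ := hne B' hB'
        obtain ⟨x, hx, rfl⟩ := Finset.mem_image.1 (hsub B' hB' hy)
        exact ⟨x, Finset.mem_filter.2 ⟨hx, hy⟩⟩
      · intro x hx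
        obtain ⟨B', ⟨hB'Q, hfx⟩, huniq⟩ := hcov (f x) (Finset.mem_image_of_mem f hx)
        refine ⟨g B', ⟨Finset.mem_image_of_mem g hB'Q, Finset.mem_filter.2 ⟨hx, hfx⟩⟩, ?_⟩
        rintro C ⟨hCQ, hxC⟩
        obtain ⟨C', hC', rfl⟩ := Finset.mem_image.1 hCQ
        have : f x ∈ C' := (Finset.mem_filter.1 hxC).2
        rw [huniq C' ⟨hC', this⟩]
      · rintro B hB
        obtain ⟨B', hB', rfl⟩ := Finset.mem_image.1 hB
        obtain ⟨h1, h2⟩ := balcard (g B') (Finset.filter_subset _ _)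
        rw [hback B' hB'] at h1 h2
        rw [← h1, ← h2]; exact hbal B' hB'
    · rw [Finset.image_image]
      calc Q.image ((Finset.image f) ∘ g) = Q.image id := Finset.image_congr (fun B' hB' => hback B' hB')
        _ = Q := Finset.image_id

theorem BPF_split (par : α → Bool) (S : Finset α) (a : α) (ha : a ∈ S) :
    (BPF par S).card = ∑ B ∈ S.powerset.filter (fun B => a ∈ B ∧
        (B.filter (fun x => par x)).card = (B.filter (fun x => ¬ par x)).card),
      (BPF par (S \ B)).card := by
  set 𝔅 := S.powerset.filter (fun B => a ∈ B ∧
      (B.filter (fun x => par x)).card = (B.filter (fun x => ¬ par x)).card) with h𝔅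
  have hnotmem : ∀ B ∈ 𝔅, ∀ P ∈ BPF par (S \ B), B ∉ P := by
    intro B hB P hP hBP
    obtain ⟨hsub, -, -, -⟩ := mem_BPF.1 hP
    obtain ⟨-, haB, -⟩ := Finset.mem_filter.1 hB
    exact (Finset.mem_sdiff.1 (hsub B hBP haB)).2 haB
  have key : BPF par S = 𝔅.biUnion (fun B => (BPF par (S \ B)).image (insert B)) := by
    ext P
    rw [Finset.mem_biUnion]
    constructor
    · intro hP
      obtain ⟨hsub, hne, hcov, hbal⟩ := mem_BPF.1 hP
      obtain ⟨B, ⟨hBP, haB⟩, huniq⟩ := hcov a ha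
      have hB𝔅 : B ∈ 𝔅 := Finset.mem_filter.2 ⟨Finset.mem_powerset.2 (hsub B hBP), haB, hbal B hBP⟩
      refine ⟨B, hB𝔅, Finset.mem_image.2 ⟨P.erase B, ?_, Finset.insert_erase hBP⟩⟩
      refine mem_BPF.2 ⟨?_, ?_, ?_, ?_⟩
      · intro C hC
        obtain ⟨hCB, hCP⟩ := Finset.mem_erase.1 hC
        intro x hx
        refine Finset.mem_sdiff.2 ⟨hsub C hCP hx, fun hxB => ?_⟩
        obtain ⟨D, -, hu⟩ := hcov x (hsub C hCP hx)
        exact hCB ((hu C ⟨hCP, hx⟩).trans (hu B ⟨hBP, hxB⟩).symm)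
      · intro C hC; exact hne C (Finset.mem_erase.1 hC).2
      · intro x hx
        obtain ⟨hxS, hxB⟩ := Finset.mem_sdiff.1 hx
        obtain ⟨C, ⟨hCP, hxC⟩, hu⟩ := hcov x hxS
        have hCB : C ≠ B := fun h => hxB (h ▸ hxC)
        refine ⟨C, ⟨Finset.mem_erase.2 ⟨hCB, hCP⟩, hxC⟩, ?_⟩
        rintro D ⟨hD, hxD⟩
        exact hu D ⟨(Finset.mem_erase.1 hD).2, hxD⟩
      · intro C hC; exact hbal C (Finset.mem_erase.1 hC).2
    · rintro ⟨B, hB𝔅, hPim⟩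
      obtain ⟨P', hP', rfl⟩ := Finset.mem_image.1 hPim
      obtain ⟨hBS, haB, hBbal⟩ := Finset.mem_filter.1 hB𝔅
      rw [Finset.mem_powerset] at hBS
      obtain ⟨hsub, hne, hcov, hbal⟩ := mem_BPF.1 hP'
      refine mem_BPF.2 ⟨?_, ?_, ?_, ?_⟩
      · intro C hC
        rcases Finset.mem_insert.1 hC with rfl | hC
        · exact hBS
        · exact (hsub C hC).trans (Finset.sdiff_subset)
      · intro C hC
        rcases Finset.mem_insert.1 hC with rfl | hC
        · exact ⟨a, haB⟩
        · exact hne C hC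
      · intro x hx
        by_cases hxB : x ∈ B
        · refine ⟨B, ⟨Finset.mem_insert_self B P', hxB⟩, ?_⟩
          rintro C ⟨hC, hxC⟩
          rcases Finset.mem_insert.1 hC with rfl | hC
          · rfl
          · exact absurd hxB (Finset.mem_sdiff.1 (hsub C hC hxC)).2
        · obtain ⟨C, ⟨hCP, hxC⟩, hu⟩ := hcov x (Finset.mem_sdiff.2 ⟨hx, hxB⟩)
          refine ⟨C, ⟨Finset.mem_insert_of_mem hCP, hxC⟩, ?_⟩
          rintro D ⟨hD, hxD⟩
          rcases Finset.mem_insert.1 hD with rfl | hD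
          · exact absurd hxD hxB
          · exact hu D ⟨hD, hxD⟩
      · intro C hC
        rcases Finset.mem_insert.1 hC with rfl | hC
        · exact hBbal
        · exact hbal C hC
  rw [key, Finset.card_biUnion]
  · apply Finset.sum_congr rfl
    intro B hB
    apply Finset.card_image_of_injOn
    intro P1 h1 P2 h2 h
    have n1 := hnotmem B hB P1 h1
    have n2 := hnotmem B hB P2 h2
    rw [← Finset.erase_insert n1, ← Finset.erase_insert n2, h]
  · intro B1 h1 B2 h2 hne
    simp only [Finset.disjoint_left]
    intro P hP1 hP2
    obtain ⟨P1, hP1', rfl⟩ := Finset.mem_image.1 hP1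
    obtain ⟨P2, hP2', heq⟩ := Finset.mem_image.1 hP2
    have hB2 : B2 ∈ insert B1 P1 := heq ▸ Finset.mem_insert_self B2 P2
    rcases Finset.mem_insert.1 hB2 with h | h
    · exact hne h.symm
    · obtain ⟨hsub, -, -, -⟩ := mem_BPF.1 hP1'
      obtain ⟨-, haB2, -⟩ := Finset.mem_filter.1 h2
      obtain ⟨-, haB1, -⟩ := Finset.mem_filter.1 h1
      exact (Finset.mem_sdiff.1 (hsub B2 h haB2)).2 haB1

def stdpar (m : ℕ) : Fin m → Bool := fun x => decide (x.val % 2 = 0)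

theorem c_eq_BPF (t : ℕ) : c t = (BPF (stdpar (2 * t)) (univ : Finset (Fin (2 * t)))).card := by
  have hset : {P : Finset (Finset (Fin (2 * t))) | IsPartition P ∧ IsBalanced P}
      = ↑(BPF (stdpar (2 * t)) (univ : Finset (Fin (2 * t)))) := by
    ext P
    simp only [Set.mem_setOf_eq, Finset.mem_coe, mem_BPF]
    constructor
    · rintro ⟨⟨hne, hcov⟩, hbal⟩
      refine ⟨fun B _ => Finset.subset_univ B, hne, fun x _ => hcov x, fun B hB => ?_⟩
      have h1 : B.filter (fun x => (stdpar (2 * t) x : Prop))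
          = B.filter (fun x => x.val % 2 = 0) :=
        Finset.filter_congr (fun x _ => by simp [stdpar])
      have h2 : B.filter (fun x => ¬ (stdpar (2 * t) x : Prop))
          = B.filter (fun x => x.val % 2 = 1) :=
        Finset.filter_congr (fun x _ => by simp only [stdpar, decide_eq_true_eq]; omega)
      rw [h1, h2]; exact hbal B hB
    · rintro ⟨-, hne, hcov, hbal⟩
      refine ⟨⟨hne, fun x => hcov x (Finset.mem_univ x)⟩, fun B hB => ?_⟩
      have h1 : B.filter (fun x => (stdpar (2 * t) x : Prop))
          = B.filter (fun x => x.val % 2 = 0) :=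
        Finset.filter_congr (fun x _ => by simp [stdpar])
      have h2 : B.filter (fun x => ¬ (stdpar (2 * t) x : Prop))
          = B.filter (fun x => x.val % 2 = 1) :=
        Finset.filter_congr (fun x _ => by simp only [stdpar, decide_eq_true_eq]; omega)
      rw [← h1, ← h2]; exact hbal B hB
  rw [c, hset, Set.ncard_coe_finset]

theorem BPF_card_eq_c (par : α → Bool) (S : Finset α) (t : ℕ)
    (h1 : (S.filter (fun x => par x)).card = t)
    (h2 : (S.filter (fun x => ¬ par x)).card = t) :
    (BPF par S).card = c t := by
  set T := S.filter (fun x => par x) with hT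
  set F := S.filter (fun x => ¬ par x) with hF
  set e1 : T ≃ Fin t := T.equivFinOfCardEq h1 with he1
  set e2 : F ≃ Fin t := F.equivFinOfCardEq h2 with he2
  set f : Fin (2 * t) → α := fun i =>
    if h : i.val % 2 = 0 then (e1.symm ⟨i.val / 2, by omega⟩ : T)
    else (e2.symm ⟨i.val / 2, by omega⟩ : F) with hf
  have hparT : ∀ j : Fin t, par ((e1.symm j : T) : α) = true :=
    fun j => (Finset.mem_filter.1 (e1.symm j).2).2
  have hparF : ∀ j : Fin t, par ((e2.symm j : F) : α) = false := by
    intro j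
    have := (Finset.mem_filter.1 (e2.symm j).2).2
    simpa using this
  have hparf : ∀ i : Fin (2 * t), par (f i) = stdpar (2 * t) i := by
    intro i
    by_cases h : i.val % 2 = 0
    · simp only [hf, dif_pos h, hparT, stdpar, h]; simp
    · simp only [hf, dif_neg h, hparF, stdpar]
      simp [h]
  have hinj : Set.InjOn f (univ : Finset (Fin (2 * t))) := by
    intro i _ j _ hij
    by_cases hi : i.val % 2 = 0 <;> by_cases hj : j.val % 2 = 0
    · simp only [hf, dif_pos hi, dif_pos hj] at hij
      have h' : (⟨i.val / 2, by omega⟩ : Fin t) = ⟨j.val / 2, by omega⟩ :=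
        e1.symm.injective (Subtype.coe_injective hij)
      have : i.val / 2 = j.val / 2 := congrArg Fin.val h'
      exact Fin.ext (by omega)
    · exfalso
      have := congrArg par hij
      rw [hparf i, hparf j] at this
      simp [stdpar, hi, hj] at this
    · exfalso
      have := congrArg par hij
      rw [hparf i, hparf j] at this
      simp [stdpar, hi, hj] at this
    · simp only [hf, dif_neg hi, dif_neg hj] at hij
      have h' : (⟨i.val / 2, by omega⟩ : Fin t) = ⟨j.val / 2, by omega⟩ :=
        e2.symm.injective (Subtype.coe_injective hij)
      have : i.val / 2 = j.val / 2 := congrArg Fin.val h'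
      exact Fin.ext (by omega)
  have himage : (univ : Finset (Fin (2 * t))).image f = S := by
    apply Finset.eq_of_subset_of_card_le
    · intro y hy
      obtain ⟨i, -, rfl⟩ := Finset.mem_image.1 hy
      by_cases h : i.val % 2 = 0
      · simp only [hf, dif_pos h]
        exact Finset.mem_of_mem_filter _ (e1.symm _).2
      · simp only [hf, dif_neg h]
        exact Finset.mem_of_mem_filter _ (e2.symm _).2
    · rw [Finset.card_image_of_injOn hinj, Finset.card_univ, Fintype.card_fin]
      have hsum : T.card + F.card = S.card := by
        rw [hT, hF]
        exact Finset.card_filter_add_card_filter_not (fun x => (par x : Prop))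
      omega
  have := BPF_card_transfer (stdpar (2 * t)) par f (univ : Finset (Fin (2 * t)))
    hinj (fun x _ => hparf x)
  rw [himage] at this
  rw [← this, c_eq_BPF]

theorem even_card (k : ℕ) :
    ((univ : Finset (Fin (2 * k))).filter (fun x => (stdpar (2 * k) x : Prop))).card = k := by
  have hres : ((univ : Finset (Fin (2 * k))).filter (fun x => (stdpar (2 * k) x : Prop))).card
      = (univ : Finset (Fin k)).card := by
    refine Finset.card_bij' (fun x _ => (⟨x.val / 2, by omega⟩ : Fin k))
      (fun y _ => (⟨2 * y.val, by omega⟩ : Fin (2 * k))) ?_ ?_ ?_ ?_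
    · intro x hx; exact Finset.mem_univ _
    · intro y hy
      refine Finset.mem_filter.2 ⟨Finset.mem_univ _, ?_⟩
      simp [stdpar]
    · intro x hx
      have : x.val % 2 = 0 := by
        have := (Finset.mem_filter.1 hx).2
        simpa [stdpar] using this
      exact Fin.ext (by simp; omega)
    · intro y hy
      exact Fin.ext (by simp)
  rw [hres]; simp

theorem odd_card (k : ℕ) :
    ((univ : Finset (Fin (2 * k))).filter (fun x => ¬ (stdpar (2 * k) x : Prop))).card = k := by
  have h := Finset.card_filter_add_card_filter_not
    (s := (univ : Finset (Fin (2 * k)))) (p := fun x => (stdpar (2 * k) x : Prop))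
  rw [even_card] at h
  rw [Finset.card_univ, Fintype.card_fin] at h
  omega

theorem fiber_card (par : α → Bool) (S : Finset α) (a : α) (ha : a ∈ S) (hpa : par a = false)
    (j : ℕ) (hj : 1 ≤ j) :
    ((S.powerset.filter (fun B => a ∈ B ∧
        (B.filter (fun x => par x)).card = (B.filter (fun x => ¬ par x)).card)).filter
      (fun B => (B.filter (fun x => par x)).card = j)).card
    = ((S.filter (fun x => par x)).powersetCard j ×ˢ
        (((S.filter (fun x => ¬ par x)).erase a).powersetCard (j - 1))).card := by
  refine Finset.card_bij' (fun B _ => (B.filter (fun x => par x), (B.filter (fun x => ¬ par x)).erase a))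
    (fun p _ => p.1 ∪ insert a p.2) ?_ ?_ ?_ ?_
  · -- forward membership
    rintro B hB
    obtain ⟨hB1, hBj⟩ := Finset.mem_filter.1 hB
    obtain ⟨hBS, haB, hbal⟩ := Finset.mem_filter.1 hB1
    rw [Finset.mem_powerset] at hBS
    refine Finset.mem_product.2 ⟨?_, ?_⟩
    · exact Finset.mem_powersetCard.2 ⟨Finset.filter_subset_filter _ hBS, hBj⟩
    · refine Finset.mem_powersetCard.2 ⟨?_, ?_⟩
      · exact Finset.erase_subset_erase a (Finset.filter_subset_filter _ hBS)
      · have haBf : a ∈ B.filter (fun x => ¬ par x) :=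
          Finset.mem_filter.2 ⟨haB, by simp [hpa]⟩
        rw [Finset.card_erase_of_mem haBf, ← hbal, hBj]
  · -- backward membership
    rintro ⟨X, Y⟩ hp
    obtain ⟨hX, hY⟩ := Finset.mem_product.1 hp
    obtain ⟨hXs, hXc⟩ := Finset.mem_powersetCard.1 hX
    obtain ⟨hYs, hYc⟩ := Finset.mem_powersetCard.1 hY
    have haY : a ∉ Y := fun h => (Finset.mem_erase.1 (hYs h)).1 rfl
    have hXpar : ∀ x ∈ X, par x = true := fun x hx => (Finset.mem_filter.1 (hXs hx)).2
    have hYpar : ∀ x ∈ Y, par x = false := by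
      intro x hx
      have := (Finset.mem_filter.1 (Finset.mem_of_mem_erase (hYs hx))).2
      simpa using this
    have hfilt1 : (X ∪ insert a Y).filter (fun x => (par x : Prop)) = X := by
      rw [Finset.filter_union, Finset.filter_insert]
      rw [if_neg (by simp [hpa])]
      rw [Finset.filter_true_of_mem (fun x hx => by simp [hXpar x hx]),
        Finset.filter_false_of_mem (fun x hx => by simp [hYpar x hx]), Finset.union_empty]
    have hfilt2 : (X ∪ insert a Y).filter (fun x => ¬ (par x : Prop)) = insert a Y := by
      rw [Finset.filter_union, Finset.filter_insert]
      rw [if_pos (by simp [hpa])]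
      rw [Finset.filter_false_of_mem (fun x hx => by simp [hXpar x hx]),
        Finset.filter_true_of_mem (fun x hx => by simp [hYpar x hx]), Finset.empty_union]
    refine Finset.mem_filter.2 ⟨Finset.mem_filter.2 ⟨?_, ?_, ?_⟩, ?_⟩
    · rw [Finset.mem_powerset]
      refine Finset.union_subset (hXs.trans (Finset.filter_subset _ _)) ?_
      exact Finset.insert_subset_iff.2 ⟨ha, (hYs.trans (Finset.erase_subset _ _)).trans (Finset.filter_subset _ _)⟩
    · exact Finset.mem_union_right _ (Finset.mem_insert_self a Y)
    · rw [hfilt1, hfilt2, hXc, Finset.card_insert_of_notMem haY, hYc]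
      omega
    · rw [hfilt1, hXc]
  · -- left inverse
    intro B hB
    obtain ⟨hB1, hBj⟩ := Finset.mem_filter.1 hB
    obtain ⟨hBS, haB, hbal⟩ := Finset.mem_filter.1 hB1
    have haBf : a ∈ B.filter (fun x => ¬ par x) :=
      Finset.mem_filter.2 ⟨haB, by simp [hpa]⟩
    simp only
    rw [Finset.insert_erase haBf, Finset.filter_union_filter_not_eq]
  · -- right inverse
    rintro ⟨X, Y⟩ hp
    obtain ⟨hX, hY⟩ := Finset.mem_product.1 hp
    obtain ⟨hXs, hXc⟩ := Finset.mem_powersetCard.1 hX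
    obtain ⟨hYs, hYc⟩ := Finset.mem_powersetCard.1 hY
    have haY : a ∉ Y := fun h => (Finset.mem_erase.1 (hYs h)).1 rfl
    have hXpar : ∀ x ∈ X, par x = true := fun x hx => (Finset.mem_filter.1 (hXs hx)).2
    have hYpar : ∀ x ∈ Y, par x = false := by
      intro x hx
      have := (Finset.mem_filter.1 (Finset.mem_of_mem_erase (hYs hx))).2
      simpa using this
    have hfilt1 : (X ∪ insert a Y).filter (fun x => (par x : Prop)) = X := by
      rw [Finset.filter_union, Finset.filter_insert]
      rw [if_neg (by simp [hpa])]
      rw [Finset.filter_true_of_mem (fun x hx => by simp [hXpar x hx]),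
        Finset.filter_false_of_mem (fun x hx => by simp [hYpar x hx]), Finset.union_empty]
    have hfilt2 : (X ∪ insert a Y).filter (fun x => ¬ (par x : Prop)) = insert a Y := by
      rw [Finset.filter_union, Finset.filter_insert]
      rw [if_pos (by simp [hpa])]
      rw [Finset.filter_false_of_mem (fun x hx => by simp [hXpar x hx]),
        Finset.filter_true_of_mem (fun x hx => by simp [hYpar x hx]), Finset.empty_union]
    simp only [hfilt1, hfilt2]
    rw [Finset.erase_insert haY]

theorem c_zero : c 0 = 1 := by
  have hset : {P : Finset (Finset (Fin (2 * 0))) | IsPartition P ∧ IsBalanced P} = {∅} := by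
    ext P
    simp only [Set.mem_setOf_eq, Set.mem_singleton_iff]
    constructor
    · rintro ⟨⟨hne, -⟩, -⟩
      rw [Finset.eq_empty_iff_forall_notMem]
      intro B hB
      obtain ⟨x, -⟩ := hne B hB
      exact x.elim0
    · rintro rfl
      exact ⟨⟨fun B hB => absurd hB (Finset.notMem_empty B), fun x => x.elim0⟩,
        fun B hB => absurd hB (Finset.notMem_empty B)⟩
  rw [c, hset, Set.ncard_singleton]

theorem c_rec (k : ℕ) (hk : 1 ≤ k) :
    c k = ∑ s ∈ Finset.range k, Nat.choose k s * Nat.choose (k - 1) s * c s := by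
  set par := stdpar (2 * k) with hpar
  set a : Fin (2 * k) := ⟨2 * k - 1, by omega⟩ with ha
  have hpa : par a = false := by
    simp only [hpar, stdpar, ha, decide_eq_false_iff_not]
    omega
  set 𝔅 := (univ : Finset (Fin (2 * k))).powerset.filter (fun B => a ∈ B ∧
      (B.filter (fun x => par x)).card = (B.filter (fun x => ¬ par x)).card) with h𝔅
  have step1 : c k = ∑ B ∈ 𝔅, (BPF par (univ \ B)).card := by
    rw [c_eq_BPF k, BPF_split par univ a (Finset.mem_univ a)]
  have step2 : ∀ B ∈ 𝔅, (BPF par (univ \ B)).card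
      = c (k - (B.filter (fun x => par x)).card) := by
    intro B hB
    obtain ⟨hBS, haB, hbal⟩ := Finset.mem_filter.1 hB
    set j := (B.filter (fun x => par x)).card with hj
    have hsd : ∀ p : Fin (2 * k) → Prop, ∀ inst : DecidablePred p,
        (univ \ B).filter p = univ.filter p \ B.filter p := by
      intro p inst
      ext x
      simp only [Finset.mem_filter, Finset.mem_sdiff, Finset.mem_univ, true_and]
      tauto
    apply BPF_card_eq_c
    · rw [hsd _ _, Finset.card_sdiff_of_subset (Finset.filter_subset_filter _ (Finset.subset_univ B))]
      rw [even_card k]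
    · rw [hsd _ _, Finset.card_sdiff_of_subset (Finset.filter_subset_filter _ (Finset.subset_univ B))]
      rw [odd_card k, ← hbal]
  rw [step1, Finset.sum_congr rfl step2]
  have hmaps : ∀ B ∈ 𝔅, (B.filter (fun x => par x)).card ∈ Finset.range (k + 1) := by
    intro B hB
    rw [Finset.mem_range, Nat.lt_succ_iff]
    calc (B.filter (fun x => par x)).card
        ≤ ((univ : Finset (Fin (2 * k))).filter (fun x => (par x : Prop))).card :=
          Finset.card_le_card (Finset.filter_subset_filter _ (Finset.subset_univ B))
      _ = k := even_card k
  rw [← Finset.sum_fiberwise_of_maps_to hmaps (fun B => c (k - (B.filter (fun x => par x)).card))]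
  have inner : ∀ j ∈ Finset.range (k + 1),
      (∑ B ∈ 𝔅.filter (fun B => (B.filter (fun x => par x)).card = j),
        c (k - (B.filter (fun x => par x)).card))
      = (𝔅.filter (fun B => (B.filter (fun x => par x)).card = j)).card * c (k - j) := by
    intro j _
    rw [Finset.sum_congr rfl (fun B hB => by
      rw [(Finset.mem_filter.1 hB).2]), Finset.sum_const, smul_eq_mul]
  rw [Finset.sum_congr rfl inner]
  have hfc : ∀ j, 1 ≤ j →
      (𝔅.filter (fun B => (B.filter (fun x => par x)).card = j)).card
      = Nat.choose k j * Nat.choose (k - 1) (j - 1) := by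
    intro j hj
    rw [h𝔅, fiber_card par univ a (Finset.mem_univ a) hpa j hj]
    rw [Finset.card_product, Finset.card_powersetCard, Finset.card_powersetCard]
    rw [even_card k]
    have hO : a ∈ (univ : Finset (Fin (2 * k))).filter (fun x => ¬ (par x : Prop)) :=
      Finset.mem_filter.2 ⟨Finset.mem_univ a, by simp [hpa]⟩
    rw [Finset.card_erase_of_mem hO, odd_card k]
  have hf0 : (𝔅.filter (fun B => (B.filter (fun x => par x)).card = 0)).card = 0 := by
    rw [Finset.card_eq_zero, Finset.filter_eq_empty_iff]
    intro B hB hc0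
    obtain ⟨hBS, haB, hbal⟩ := Finset.mem_filter.1 hB
    have : a ∈ B.filter (fun x => ¬ (par x : Prop)) :=
      Finset.mem_filter.2 ⟨haB, by simp [hpa]⟩
    have hne : (B.filter (fun x => ¬ (par x : Prop))).card ≠ 0 :=
      Finset.card_ne_zero_of_mem this
    omega
  rw [Finset.sum_range_succ']
  rw [hf0, Nat.zero_mul, Nat.add_zero]
  have congr1 : ∀ j ∈ Finset.range k,
      (𝔅.filter (fun B => (B.filter (fun x => par x)).card = j + 1)).card * c (k - (j + 1))
      = (fun s => Nat.choose k (k - s) * Nat.choose (k - 1) (k - 1 - s) * c s) (k - 1 - j) := by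
    intro j hj
    rw [Finset.mem_range] at hj
    rw [hfc (j + 1) (by omega)]
    simp only
    have e1 : k - (k - 1 - j) = j + 1 := by omega
    have e2 : k - 1 - (k - 1 - j) = j := by omega
    have e3 : k - (j + 1) = k - 1 - j := by omega
    rw [e1, e2, e3, Nat.add_sub_cancel]
  rw [Finset.sum_congr rfl congr1,
    Finset.sum_range_reflect (fun s => Nat.choose k (k - s) * Nat.choose (k - 1) (k - 1 - s) * c s) k]
  apply Finset.sum_congr rfl
  intro s hs
  rw [Finset.mem_range] at hs
  show Nat.choose k (k - s) * Nat.choose (k - 1) (k - 1 - s) * c s = _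
  rw [Nat.choose_symm (by omega), Nat.choose_symm (by omega)]


theorem balanced_partition_recursion :
    c 0 = 1 ∧
    ∀ k : ℕ, 1 ≤ k →
      c k = ∑ s ∈ Finset.range k, Nat.choose k s * Nat.choose (k - 1) s * c s :=
  ⟨c_zero, c_rec⟩
end

section
/- For s ≥ 3 the partition p = {{1,4},{2,5},{3,6}} of {1,...,6} (each block pairing positions i and i+3) is s-balanced but not locally s-balanced. -/
/-- A finite collection `Q` of blocks inside `Fin m`, whose retained points
(the union of the blocks) are relabeled consecutively `1,2,…` in increasing
order, is `s`-balanced if its total number of legs is even and in each block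
the number of odd new labels is congruent to the number of even new labels
modulo `s`.  The new label of `x` is odd iff the number of retained points
below `x` is even. -/
def SBalancedRel {m : ℕ} (s : ℕ) (Q : Finset (Finset (Fin m))) : Prop :=
  Even (∑ B ∈ Q, B.card) ∧
  ∀ B ∈ Q,
    (B.filter (fun x => ((Q.sup id).filter (· < x)).card % 2 = 0)).card
      ≡ (B.filter (fun x => ((Q.sup id).filter (· < x)).card % 2 = 1)).card [MOD s]

/-- A partition is locally `s`-balanced if every subpartition formed by a
subset of its blocks, relabeled consecutively, is `s`-balanced. -/
def LocallySBalanced {m : ℕ} (s : ℕ) (P : Finset (Finset (Fin m))) : Prop :=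
  ∀ Q ⊆ P, SBalancedRel s Q

theorem sBalancedRel_of_card_eq {m : ℕ} (s : ℕ) {Q : Finset (Finset (Fin m))}
    (heven : Even (∑ B ∈ Q, B.card))
    (hcard : ∀ B ∈ Q,
      (B.filter (fun x => ((Q.sup id).filter (· < x)).card % 2 = 0)).card
        = (B.filter (fun x => ((Q.sup id).filter (· < x)).card % 2 = 1)).card) :
    SBalancedRel s Q :=
  ⟨heven, fun B hB => hcard B hB ▸ Nat.ModEq.refl _⟩

/-- After relabeling, a crossing `a < b < c < d` becomes `{{1,3},{2,4}}`, so the block `{a,c}`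
has two odd labels and no even one. -/
theorem not_sBalancedRel_crossing {m s : ℕ} (hs : 3 ≤ s) {a b c d : Fin m}
    (hab : a < b) (hbc : b < c) (hcd : c < d) :
    ¬ SBalancedRel s {{a, c}, {b, d}} := by
  rintro ⟨-, hbal⟩
  have hsup : ({{a, c}, {b, d}} : Finset (Finset (Fin m))).sup id = {a, b, c, d} := by
    ext x
    simp only [Finset.sup_insert, Finset.sup_singleton, id, Finset.sup_eq_union,
      Finset.mem_union, Finset.mem_insert, Finset.mem_singleton]
    tauto
  have hbelow_a : ({a, b, c, d} : Finset (Fin m)).filter (· < a) = ∅ := by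
    ext x; simp only [Finset.mem_filter, Finset.mem_insert, Finset.mem_singleton,
      Finset.notMem_empty, iff_false, not_and]; rintro (rfl | rfl | rfl | rfl) <;> order
  have hbelow_c : ({a, b, c, d} : Finset (Fin m)).filter (· < c) = {a, b} := by
    ext x; simp only [Finset.mem_filter, Finset.mem_insert, Finset.mem_singleton]
    constructor
    · rintro ⟨rfl | rfl | rfl | rfl, hx⟩ <;> first | tauto | order
    · rintro (rfl | rfl) <;> simp only [true_or, or_true, true_and] <;> order
  have hac : a ≠ c := (hab.trans hbc).ne
  have hodd_labels : ({a, c} : Finset (Fin m)).filter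
      (fun x => (({a, b, c, d} : Finset (Fin m)).filter (· < x)).card % 2 = 0) = {a, c} :=
    Finset.filter_true_of_mem (by
      simp only [Finset.mem_insert, Finset.mem_singleton]
      rintro x (rfl | rfl)
      · simp [hbelow_a]
      · simp [hbelow_c, hab.ne])
  have hno_even_labels : ({a, c} : Finset (Fin m)).filter
      (fun x => (({a, b, c, d} : Finset (Fin m)).filter (· < x)).card % 2 = 1) = ∅ :=
    Finset.filter_false_of_mem (by
      simp only [Finset.mem_insert, Finset.mem_singleton]
      rintro x (rfl | rfl)
      · simp [hbelow_a]
      · simp [hbelow_c, hab.ne])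
  have h2 := hbal {a, c} (by simp)
  rw [hsup, hodd_labels, hno_even_labels, Finset.card_pair hac, Finset.card_empty] at h2
  have := Nat.le_of_dvd two_pos (Nat.modEq_zero_iff_dvd.1 h2)
  omega

/-- The partition `{{1,4},{2,5},{3,6}}` of `{1,…,6}` (encoded on `Fin 6` as
`{{0,3},{1,4},{2,5}}`) is `s`-balanced but not locally `s`-balanced, for any
`s ≥ 3`. -/
theorem half_commutation_partition_balanced_not_locally (s : ℕ) (hs : 3 ≤ s) :
    SBalancedRel s ({{0, 3}, {1, 4}, {2, 5}} : Finset (Finset (Fin 6))) ∧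
    ¬ LocallySBalanced s ({{0, 3}, {1, 4}, {2, 5}} : Finset (Finset (Fin 6))) := by
  -- each block `{i, i+3}` spans an odd distance, so its two labels have opposite parities
  refine ⟨sBalancedRel_of_card_eq s (by decide) (by decide), fun hloc => ?_⟩
  have hcrossing : ({{0, 3}, {1, 4}} : Finset (Finset (Fin 6))) ⊆ {{0, 3}, {1, 4}, {2, 5}} := by
    decide
  exact not_sBalancedRel_crossing hs (by decide) (by decide) (by decide) (hloc _ hcrossing)
end

section
/- Every noncrossing partition of {1,...,2k} all of whose blocks have even size is balanced: in each block the number of odd elements equals the number of even elements. -/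
/-- A partition is noncrossing if whenever `a < b < c < d` with `a, c` in one
block and `b, d` in another block, the two blocks coincide. -/
def Noncrossing {m : ℕ} (P : Finset (Finset (Fin m))) : Prop :=
  ∀ a b c d : Fin m, a < b → b < c → c < d →
    ∀ B ∈ P, ∀ B' ∈ P, a ∈ B → c ∈ B → b ∈ B' → d ∈ B' → B = B'

open Finset

namespace List

theorem isChain_of_forall_adjacent {α : Type*} [LinearOrder α] {R : α → α → Prop} :
    ∀ {l : List α}, l.Pairwise (· < ·) →
      (∀ a ∈ l, ∀ b ∈ l, a < b → (∀ c ∈ l, ¬(a < c ∧ c < b)) → R a b) → l.IsChain R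
  | [], _, _ => .nil
  | [_], _, _ => .singleton _
  | a :: b :: t, hl, h => by
    have hab : a < b := rel_of_pairwise_cons hl mem_cons_self
    refine isChain_cons_cons.mpr ⟨h a (by simp) b (by simp) hab ?_, ?_⟩
    · rintro c hc ⟨hac, hcb⟩
      simp only [mem_cons] at hc
      rcases hc with rfl | rfl | hc
      · exact lt_irrefl _ hac
      · exact lt_irrefl _ hcb
      · exact (rel_of_pairwise_cons hl.of_cons hc).not_gt hcb
    · refine isChain_of_forall_adjacent hl.of_cons fun x hx y hy hxy hgap => ?_
      refine h x (mem_cons_of_mem _ hx) y (mem_cons_of_mem _ hy) hxy fun c hc => ?_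
      rcases mem_cons.mp hc with rfl | hc
      · exact fun ⟨hcx, _⟩ => (rel_of_pairwise_cons hl hx).not_gt hcx
      · exact hgap c hc

theorem countP_eq_countP_not_of_isChain {α : Type*} {p : α → Bool} :
    ∀ {l : List α}, l.IsChain (fun a b => p a ≠ p b) → Even l.length →
      l.countP p = l.countP (fun a => !p a)
  | [], _, _ => rfl
  | [_], _, h => absurd h Nat.not_even_one
  | a :: b :: t, hl, h => by
    obtain ⟨hab, ht⟩ := isChain_cons_cons.mp hl
    have ih : t.countP p = t.countP (fun a => !p a) :=
      countP_eq_countP_not_of_isChain ht.tail (by simpa [parity_simps] using h)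
    simp only [countP_cons, ih]
    cases hpa : p a <;> cases hpb : p b <;> simp_all

end List

theorem Finset.card_filter_eq_card_filter_not_of_alternating {α : Type*} [LinearOrder α]
    (S : Finset α) (p : α → Prop) [DecidablePred p] (heven : Even #S)
    (halt : ∀ a ∈ S, ∀ b ∈ S, a < b → (∀ c ∈ S, ¬(a < c ∧ c < b)) → (p a ↔ ¬p b)) :
    #(S.filter p) = #(S.filter (¬p ·)) := by
  have hcard (q : α → Prop) [DecidablePred q] :
      #(S.filter q) = (S.sort (· ≤ ·)).countP (fun a => decide (q a)) := by
    rw [card_def, filter_val, ← Multiset.countP_eq_card_filter, ← sort_eq S (· ≤ ·),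
      Multiset.coe_countP]
  rw [hcard, hcard]
  simp only [decide_not]
  refine List.countP_eq_countP_not_of_isChain ?_
    (by rwa [length_sort (r := fun a b : α => a ≤ b)])
  refine List.isChain_of_forall_adjacent (sortedLT_sort S).pairwise fun a ha b hb hab hgap => ?_
  simp only [mem_sort] at ha hb
  have hpab := halt a ha b hb hab fun c hc => hgap c ((mem_sort _).mpr hc)
  by_cases p a <;> simp_all

namespace IsPartition

variable {m : ℕ} {P : Finset (Finset (Fin m))}

theorem eq_of_mem (hP : IsPartition P) {B B' : Finset (Fin m)} (hB : B ∈ P) (hB' : B' ∈ P)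
    {x : Fin m} (hxB : x ∈ B) (hxB' : x ∈ B') : B = B' := by
  obtain ⟨C, _, hC⟩ := hP.2 x
  exact (hC B ⟨hB, hxB⟩).trans (hC B' ⟨hB', hxB'⟩).symm

theorem even_card_of_saturated (hP : IsPartition P) (heven : ∀ B ∈ P, Even #B)
    {I : Finset (Fin m)} (hI : ∀ B ∈ P, ∀ x ∈ B, x ∈ I → B ⊆ I) : Even #I := by
  have hunion : (P.filter (· ⊆ I)).biUnion id = I := by
    ext x
    simp only [mem_biUnion, mem_filter, id]
    refine ⟨fun ⟨B, ⟨_, hBI⟩, hxB⟩ => hBI hxB, fun hx => ?_⟩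
    obtain ⟨B, ⟨hB, hxB⟩, _⟩ := hP.2 x
    exact ⟨B, ⟨hB, hI B hB x hxB hx⟩, hxB⟩
  have hdisj : ((P.filter (· ⊆ I) : Finset _) : Set (Finset (Fin m))).PairwiseDisjoint id :=
    fun B hB B' hB' hne => disjoint_left.mpr fun x hxB hxB' =>
      hne (hP.eq_of_mem (mem_filter.mp hB).1 (mem_filter.mp hB').1 hxB hxB')
  rw [← hunion, card_biUnion hdisj]
  exact sum_induction _ Even (fun _ _ => Even.add) Even.zero
    fun B hB => heven B (mem_filter.mp hB).1

end IsPartition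

theorem Noncrossing.subset_Ioo {m : ℕ} {P : Finset (Finset (Fin m))} (hnc : Noncrossing P)
    (hP : IsPartition P) {B B' : Finset (Fin m)} (hB : B ∈ P) (hB' : B' ∈ P) {u v x : Fin m}
    (hu : u ∈ B) (hv : v ∈ B) (hgap : ∀ c ∈ B, ¬(u < c ∧ c < v)) (hxB' : x ∈ B')
    (hux : u < x) (hxv : x < v) : B' ⊆ Ioo u v := by
  have hne : B' ≠ B := by
    rintro rfl
    exact hgap x hxB' ⟨hux, hxv⟩
  intro y hy
  rw [mem_Ioo]
  by_contra hout
  rcases lt_trichotomy y u with hyu | rfl | huy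
  · exact hne (hnc y u x v hyu hux hxv B' hB' B hB hy hxB' hu hv)
  · exact hne (hP.eq_of_mem hB' hB hy hu)
  rcases lt_trichotomy y v with hyv | rfl | hvy
  · exact hout ⟨huy, hyv⟩
  · exact hne (hP.eq_of_mem hB' hB hy hv)
  · exact hne (hnc u x v y hux hxv hvy B hB B' hB' hu hv hxB' hy).symm

/-- Every noncrossing partition of `{1,…,2k}` (encoded on `Fin (2k)`, position
`i` carrying label `i+1`) all of whose blocks have even size is balanced: in
each block the number of odd labels equals the number of even labels. -/
theorem noncrossing_even_blocks_balanced {k : ℕ}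
    (P : Finset (Finset (Fin (2 * k)))) (hP : IsPartition P)
    (hnc : Noncrossing P) (heven : ∀ B ∈ P, Even B.card) :
    ∀ B ∈ P, (B.filter (fun x => x.val % 2 = 0)).card
      = (B.filter (fun x => x.val % 2 = 1)).card := by
  intro B hB
  have hodd : B.filter (fun x => x.val % 2 = 1) = B.filter (fun x => ¬x.val % 2 = 0) :=
    filter_congr fun x _ => Nat.mod_two_ne_zero.symm
  rw [hodd]
  refine B.card_filter_eq_card_filter_not_of_alternating _ (heven B hB)
    fun u hu v hv huv hgap => ?_
  have hIoo : Even #(Ioo u v) := hP.even_card_of_saturated heven fun B' hB' x hxB' hx =>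
    hnc.subset_Ioo hP hB hB' hu hv hgap hxB' (mem_Ioo.mp hx).1 (mem_Ioo.mp hx).2
  rw [Fin.card_Ioo, Nat.even_iff] at hIoo
  have huv_val : u.val < v.val := huv
  omega
end

section
/- If x_1,...,x_s are independent Poisson random variables each of parameter t/s, and ω = e^{2πi/s}, then the complex random variables z = Σ_{r=1}^s ω^r x_r (for varying t > 0) form a convolution semigroup: the s-Bessel law of parameter t convolved with the s-Bessel law of parameter t' is the s-Bessel law of parameter t + t'. -/
open MeasureTheory ProbabilityTheory Complex
open scoped NNReal

/-- The `s`-Bessel law of parameter `t > 0`: the distribution of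
`∑_{r=1}^s e^{2πir/s} x_r` where `x_1,…,x_s` are independent Poisson
variables of parameter `t/s`, viewed as a probability measure on `ℂ`. -/
noncomputable def besselLaw (s : ℕ) (t : ℝ≥0) : Measure ℂ :=
  Measure.map
    (fun x : Fin s → ℕ =>
      ∑ r : Fin s, Complex.exp (2 * Real.pi * Complex.I * (r.val + 1) / s) * (x r : ℂ))
    (Measure.pi fun _ : Fin s => ((poissonPMF (t / s)).toMeasure))

/-!
The Bessel law is the image of a product of Poisson laws under the additive map
`x ↦ ∑ r, ω ^ (r + 1) * x r`, where `ω = e^{2πi/s}`. Taking images under additive maps and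
taking finite products both commute with convolution, so the semigroup property reduces
coordinatewise to
`Po(a) ∗ Po(b) = Po(a + b)`.
-/

lemma ProbabilityTheory.poissonPMF_toMeasure (r : ℝ≥0) :
    (poissonPMF r).toMeasure = poissonMeasure r :=
  Measure.ext_of_singleton fun n => by
    rw [PMF.toMeasure_apply_singleton _ _ (measurableSet_singleton n), poissonMeasure_singleton]
    rfl

lemma MeasureTheory.Measure.pi_conv_pi {ι M : Type*} [Fintype ι] [AddMonoid M]
    [MeasurableSpace M] [MeasurableAdd₂ M] (μ ν : ι → Measure M) [∀ i, IsFiniteMeasure (μ i)]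
    [∀ i, IsFiniteMeasure (ν i)] :
    Measure.pi μ ∗ Measure.pi ν = Measure.pi fun i => μ i ∗ ν i := by
  rw [Measure.conv, ← (measurePreserving_arrowProdEquivProdArrow M M ι μ ν).map_eq,
    Measure.map_map measurable_add (MeasurableEquiv.arrowProdEquivProdArrow M M ι).measurable]
  exact (measurePreserving_pi _ _ fun i => ⟨measurable_add, rfl⟩).map_eq

noncomputable def besselSum (s : ℕ) : (Fin s → ℕ) →+ ℂ where
  toFun x := ∑ r : Fin s, Complex.exp (2 * Real.pi * Complex.I * (r.val + 1) / s) * (x r : ℂ)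
  map_zero' := by simp
  map_add' x y := by simp only [Pi.add_apply, Nat.cast_add, mul_add, Finset.sum_add_distrib]

lemma besselLaw_eq_map_besselSum (s : ℕ) (t : ℝ≥0) :
    besselLaw s t = (Measure.pi fun _ : Fin s => poissonMeasure (t / s)).map (besselSum s) := by
  simp only [besselLaw, poissonPMF_toMeasure]
  rfl

theorem besselLaw_conv_general (s : ℕ) (t t' : ℝ≥0) :
    Measure.conv (besselLaw s t) (besselLaw s t') = besselLaw s (t + t') := by
  simp only [besselLaw_eq_map_besselSum]
  rw [← Measure.map_conv_addMonoidHom _ .of_discrete, Measure.pi_conv_pi]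
  simp only [poissonMeasure_conv_poissonMeasure, add_div]

/-- The `s`-Bessel laws form a convolution semigroup: the `s`-Bessel law of
parameter `t` convolved with the `s`-Bessel law of parameter `t'` is the
`s`-Bessel law of parameter `t + t'`. -/
theorem besselLaw_conv (s : ℕ) (hs : 1 ≤ s) (t t' : ℝ≥0) (ht : 0 < t) (ht' : 0 < t') :
    Measure.conv (besselLaw s t) (besselLaw s t') = besselLaw s (t + t') :=
  besselLaw_conv_general s t t'
end

section
/- If a collection of partition sets D(k,l) ⊆ P(k,l) closed under vertical/horizontal concatenation, upside-down turning, and containing the semicircle, contains a partition with a singleton block, then it contains either the singleton partition or the double singleton partition (two singletons). -/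
/-- A partition between `k` upper and `l` lower points, viewed as the
equivalence relation (setoid) on the points whose classes are the blocks. -/
abbrev PartitionKL (k l : ℕ) := Setoid (Fin k ⊕ Fin l)

/-- Placing two partitions side by side (disjoint union). -/
def sideBySide {α β : Type*} (p : Setoid α) (q : Setoid β) : Setoid (α ⊕ β) where
  r x y := match x, y with
    | .inl a, .inl b => p a b
    | .inr a, .inr b => q a b
    | _, _ => False
  iseqv := by
    constructor
    · rintro (a | a)
      · exact p.refl a
      · exact q.refl a
    · rintro (a | a) (b | b) h
      · exact p.symm h
      · exact h.elim
      · exact h.elim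
      · exact q.symm h
    · rintro (a | a) (b | b) (c | c) h1 h2 <;> first
        | exact h1.elim | exact h2.elim
        | exact p.trans h1 h2 | exact q.trans h1 h2

/-- Horizontal concatenation (tensor product) of partitions. -/
def tensorPart {k l k' l' : ℕ} (p : PartitionKL k l) (q : PartitionKL k' l') :
    PartitionKL (k + k') (l + l') :=
  Setoid.comap (fun x => match x with
    | .inl i => match finSumFinEquiv.symm i with
      | .inl a => Sum.inl (Sum.inl a)
      | .inr a => Sum.inr (Sum.inl a)
    | .inr j => match finSumFinEquiv.symm j with
      | .inl b => Sum.inl (Sum.inr b)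
      | .inr b => Sum.inr (Sum.inr b))
    (sideBySide p q)

/-- Vertical concatenation (composition) of partitions: place `p ∈ P(k,l)` on
top of `q ∈ P(l,m)`, join blocks across the middle `l` points, and restrict to
the outer `k + m` points (closed middle components disappear). -/
def compPart {k l m : ℕ} (p : PartitionKL k l) (q : PartitionKL l m) :
    PartitionKL k m :=
  Setoid.comap (Sum.map id Sum.inr)
    (Relation.EqvGen.setoid (fun x y : Fin k ⊕ (Fin l ⊕ Fin m) => match x, y with
      | .inl a, .inl b => p (.inl a) (.inl b)
      | .inl a, .inr (.inl b) => p (.inl a) (.inr b)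
      | .inr (.inl a), .inl b => p (.inr a) (.inl b)
      | .inr (.inl a), .inr (.inl b) => p (.inr a) (.inr b) ∨ q (.inl a) (.inl b)
      | .inr (.inl a), .inr (.inr b) => q (.inl a) (.inr b)
      | .inr (.inr a), .inr (.inl b) => q (.inr a) (.inl b)
      | .inr (.inr a), .inr (.inr b) => q (.inr a) (.inr b)
      | _, _ => False))

/-- Upside-down turning of a partition. -/
def flipPart {k l : ℕ} (p : PartitionKL k l) : PartitionKL l k :=
  Setoid.comap Sum.swap p

/-- A category of partitions: a collection `D(k,l) ⊆ P(k,l)` closed under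
horizontal and vertical concatenation and upside-down turning, and containing
the identity pairing and the semicircle `∩ ∈ P(0,2)`. -/
structure PartitionCategory where
  mem : ∀ k l : ℕ, Set (PartitionKL k l)
  tensor_mem : ∀ {k l k' l'} {p : PartitionKL k l} {q : PartitionKL k' l'},
    p ∈ mem k l → q ∈ mem k' l' → tensorPart p q ∈ mem (k + k') (l + l')
  comp_mem : ∀ {k l m} {p : PartitionKL k l} {q : PartitionKL l m},
    p ∈ mem k l → q ∈ mem l m → compPart p q ∈ mem k m
  flip_mem : ∀ {k l} {p : PartitionKL k l}, p ∈ mem k l → flipPart p ∈ mem l k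
  id_mem : (⊤ : PartitionKL 1 1) ∈ mem 1 1
  semicircle_mem : (⊤ : PartitionKL 0 2) ∈ mem 0 2

/-- The position of a point when the `k + l` points are traversed
counterclockwise starting from bottom left. -/
def ord {k l : ℕ} : Fin k ⊕ Fin l → ℕ
  | .inl i => l + (k - 1 - i.val)
  | .inr j => j.val

/-- A partition is noncrossing when its strings can be drawn without
crossings. -/
def NoncrossingKL {k l : ℕ} (p : PartitionKL k l) : Prop :=
  ∀ a b c d : Fin k ⊕ Fin l, ord a < ord b → ord b < ord c → ord c < ord d →
    p a c → p b d → p a b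

/-- `p` has a singleton block. -/
def HasSingletonBlock {k l : ℕ} (p : PartitionKL k l) : Prop :=
  ∃ x, ∀ y, p x y → y = x

section Aux

/-- The reindexing map used in `tensorPart`. -/
def tmap (k l k' l' : ℕ) : Fin (k+k') ⊕ Fin (l+l') → (Fin k ⊕ Fin l) ⊕ (Fin k' ⊕ Fin l') :=
  fun x => match x with
    | .inl i => match finSumFinEquiv.symm i with
      | .inl a => Sum.inl (Sum.inl a)
      | .inr a => Sum.inr (Sum.inl a)
    | .inr j => match finSumFinEquiv.symm j with
      | .inl b => Sum.inl (Sum.inr b)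
      | .inr b => Sum.inr (Sum.inr b)

lemma tensorPart_rel {k l k' l'} (p : PartitionKL k l) (q : PartitionKL k' l') (x y) :
    tensorPart p q x y ↔ sideBySide p q (tmap k l k' l' x) (tmap k l k' l' y) :=
  Iff.rfl

lemma finSumFinEquiv_symm_dite {m n : ℕ} (i : Fin (m+n)) :
    finSumFinEquiv.symm i =
      if h : (i:ℕ) < m then Sum.inl ⟨i, h⟩ else Sum.inr ⟨(i:ℕ) - m, by omega⟩ := by
  rcases lt_or_ge (i:ℕ) m with h | h
  · rw [dif_pos h, Equiv.symm_apply_eq, finSumFinEquiv_apply_left]; ext; simp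
  · rw [dif_neg (by omega), Equiv.symm_apply_eq, finSumFinEquiv_apply_right]; ext; simp; omega

lemma tmap_inl {k l k' l' : ℕ} (i : Fin (k+k')) :
    tmap k l k' l' (.inl i) =
      if h : (i:ℕ) < k then .inl (.inl ⟨i, h⟩) else .inr (.inl ⟨(i:ℕ) - k, by omega⟩) := by
  show (match finSumFinEquiv.symm i with
    | .inl a => Sum.inl (Sum.inl a)
    | .inr a => Sum.inr (Sum.inl a)) = _
  rw [finSumFinEquiv_symm_dite]
  rcases lt_or_ge (i:ℕ) k with h | h
  · rw [dif_pos h, dif_pos h]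
  · rw [dif_neg (by omega), dif_neg (by omega)]

lemma tmap_inr {k l k' l' : ℕ} (j : Fin (l+l')) :
    tmap k l k' l' (.inr j) =
      if h : (j:ℕ) < l then .inl (.inr ⟨j, h⟩) else .inr (.inr ⟨(j:ℕ) - l, by omega⟩) := by
  show (match finSumFinEquiv.symm j with
    | .inl b => Sum.inl (Sum.inr b)
    | .inr b => Sum.inr (Sum.inr b)) = _
  rw [finSumFinEquiv_symm_dite]
  rcases lt_or_ge (j:ℕ) l with h | h
  · rw [dif_pos h, dif_pos h]
  · rw [dif_neg (by omega), dif_neg (by omega)]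

@[simp] lemma sideBySide_ll {α β} (p : Setoid α) (q : Setoid β) (a b) :
    sideBySide p q (.inl a) (.inl b) ↔ p a b := Iff.rfl
@[simp] lemma sideBySide_lr {α β} (p : Setoid α) (q : Setoid β) (a b) :
    sideBySide p q (.inl a) (.inr b) ↔ False := Iff.rfl
@[simp] lemma sideBySide_rl {α β} (p : Setoid α) (q : Setoid β) (a b) :
    sideBySide p q (.inr a) (.inl b) ↔ False := Iff.rfl
@[simp] lemma sideBySide_rr {α β} (p : Setoid α) (q : Setoid β) (a b) :
    sideBySide p q (.inr a) (.inr b) ↔ q a b := Iff.rfl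

@[simp] lemma top_rel {α} (x y : α) : (⊤ : Setoid α) x y ↔ True := Iff.rfl

end Aux
section Aux2

/-- The generating relation used in `compPart`. -/
def midRel {k l m : ℕ} (p : PartitionKL k l) (q : PartitionKL l m) :
    (Fin k ⊕ (Fin l ⊕ Fin m)) → (Fin k ⊕ (Fin l ⊕ Fin m)) → Prop :=
  fun x y => match x, y with
      | .inl a, .inl b => p (.inl a) (.inl b)
      | .inl a, .inr (.inl b) => p (.inl a) (.inr b)
      | .inr (.inl a), .inl b => p (.inr a) (.inl b)
      | .inr (.inl a), .inr (.inl b) => p (.inr a) (.inr b) ∨ q (.inl a) (.inl b)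
      | .inr (.inl a), .inr (.inr b) => q (.inl a) (.inr b)
      | .inr (.inr a), .inr (.inl b) => q (.inr a) (.inl b)
      | .inr (.inr a), .inr (.inr b) => q (.inr a) (.inr b)
      | _, _ => False

lemma compPart_rel {k l m} (p : PartitionKL k l) (q : PartitionKL l m) (x y) :
    compPart p q x y ↔
      Relation.EqvGen (midRel p q) (Sum.map id Sum.inr x) (Sum.map id Sum.inr y) :=
  Iff.rfl

lemma midRel_symm {k l m} (p : PartitionKL k l) (q : PartitionKL l m) :
    ∀ x y, midRel p q x y → midRel p q y x := by
  rintro (a | a | a) (b | b | b) h <;> simp only [midRel] at h ⊢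
  · exact p.symm h
  · exact p.symm h
  · exact p.symm h
  · exact h.imp p.symm q.symm
  · exact q.symm h
  · exact q.symm h
  · exact q.symm h

lemma eqvGen_invariant {α} {R : α → α → Prop} (φ : α → Prop)
    (h : ∀ x y, R x y → (φ x ↔ φ y)) : ∀ {x y}, Relation.EqvGen R x y → (φ x ↔ φ y) := by
  intro x y hxy
  induction hxy with
  | rel a b e => exact h _ _ e
  | refl => exact Iff.rfl
  | symm _ _ _ ih => exact ih.symm
  | trans _ _ _ _ _ ih1 ih2 => exact ih1.trans ih2

lemma compPart_singleton {k l m} (p : PartitionKL k l) (q : PartitionKL l m)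
    (x₀ : Fin k ⊕ Fin m) (φ : Fin k ⊕ (Fin l ⊕ Fin m) → Prop)
    (hx : φ (Sum.map id Sum.inr x₀))
    (hcl : ∀ x y, midRel p q x y → φ x → φ y)
    (hout : ∀ y : Fin k ⊕ Fin m, φ (Sum.map id Sum.inr y) → y = x₀) :
    ∀ y, compPart p q x₀ y → y = x₀ := by
  intro y hy
  rw [compPart_rel] at hy
  have key := eqvGen_invariant φ
    (fun a b e => ⟨hcl a b e, hcl b a (midRel_symm p q a b e)⟩) hy
  exact hout y (key.mp hx)

end Aux2
section Aux3

lemma comap_ker {α β γ} (f : α → β) (g : β → γ) :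
    Setoid.comap f (Setoid.ker g) = Setoid.ker (g ∘ f) := rfl

lemma top_eq_ker {α} : (⊤ : Setoid α) = Setoid.ker (fun _ => ()) :=
  Setoid.ext fun a b => by simp [Setoid.ker_def]

lemma sideBySide_ker {α β γ δ} (f : α → γ) (g : β → δ) :
    sideBySide (Setoid.ker f) (Setoid.ker g) = Setoid.ker (Sum.map f g) :=
  Setoid.ext fun a b => by
    rcases a with a | a <;> rcases b with b | b <;>
      simp [Setoid.ker_def, Sum.map]

lemma tensorPart_eq {k l k' l'} (p : PartitionKL k l) (q : PartitionKL k' l') :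
    tensorPart p q = Setoid.comap (tmap k l k' l') (sideBySide p q) := rfl

lemma tensorPart_ker {k l k' l'} {γ δ} (f : Fin k ⊕ Fin l → γ) (g : Fin k' ⊕ Fin l' → δ) :
    tensorPart (Setoid.ker f) (Setoid.ker g) =
      Setoid.ker (Sum.map f g ∘ tmap k l k' l') := by
  rw [tensorPart_eq, sideBySide_ker, comap_ker]

/-- The identity partition on `n` strands. -/
def idPart (n : ℕ) : PartitionKL n n := Setoid.ker (Sum.elim Fin.val Fin.val)

lemma idPart_zero_mem (C : PartitionCategory) : idPart 0 ∈ C.mem 0 0 := by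
  have h := C.comp_mem C.semicircle_mem (C.flip_mem C.semicircle_mem)
  have he : idPart 0 = compPart (⊤ : PartitionKL 0 2) (flipPart (⊤ : PartitionKL 0 2)) := by
    apply Setoid.ext
    rintro (a | a) b <;> exact a.elim0
  rw [he]; exact h

lemma idPart_succ (n : ℕ) :
    idPart (n+1) = tensorPart (idPart n) (⊤ : PartitionKL 1 1) := by
  simp only [idPart, top_eq_ker]
  rw [tensorPart_ker]
  apply Setoid.ext
  intro x y
  rw [Setoid.ker_def, Setoid.ker_def]
  rcases x with i | i <;> rcases y with j | j <;>
    simp only [Function.comp_apply, tmap_inl, tmap_inr] <;>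
    split_ifs <;>
    simp [Sum.map, Fin.ext_iff] <;>
    omega

lemma idPart_mem (C : PartitionCategory) (n : ℕ) : idPart n ∈ C.mem n n := by
  induction n with
  | zero => exact idPart_zero_mem C
  | succ n ih =>
    rw [idPart_succ]
    exact C.tensor_mem ih C.id_mem

/-- The partition in `P(a+2+b, a+b)` which caps the two points `a`, `a+1`. -/
def capW (a b : ℕ) : PartitionKL ((a+2)+b) (a+b) :=
  tensorPart (tensorPart (idPart a) (flipPart (⊤ : PartitionKL 0 2))) (idPart b)

lemma capW_mem (C : PartitionCategory) (a b : ℕ) :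
    capW a b ∈ C.mem ((a+2)+b) (a+b) :=
  C.tensor_mem (C.tensor_mem (idPart_mem C a) (C.flip_mem C.semicircle_mem)) (idPart_mem C b)

/-- Address function describing the blocks of `capW`. -/
def FW (a b : ℕ) : Fin ((a+2)+b) ⊕ Fin (a+b) → (ℕ ⊕ Unit) ⊕ ℕ
  | .inl i => if (i:ℕ) < a then .inl (.inl i) else
      if (i:ℕ) < a+2 then .inl (.inr ()) else .inr ((i:ℕ) - (a+2))
  | .inr j => if (j:ℕ) < a then .inl (.inl j) else .inr ((j:ℕ) - a)

lemma capW_rel (a b : ℕ) (x y) : capW a b x y ↔ FW a b x = FW a b y := by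
  have hcup : flipPart (⊤ : PartitionKL 0 2) = Setoid.ker ((fun _ => ()) ∘ Sum.swap) := by
    rw [flipPart, top_eq_ker, comap_ker]
  rw [capW, hcup, idPart, idPart, tensorPart_ker, tensorPart_ker, Setoid.ker_def]
  have hFW : ∀ z, (Sum.map (Sum.map (Sum.elim Fin.val Fin.val) ((fun _ => ()) ∘ Sum.swap)
        ∘ tmap a a 2 0) (Sum.elim Fin.val Fin.val) ∘ tmap (a+2) a b b) z
      = FW a b z := by
    rintro (i | j)
    · rw [Function.comp_apply, tmap_inl]
      rcases lt_or_ge (i:ℕ) a with h | h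
      · rw [dif_pos (by omega : (i:ℕ) < a+2), Sum.map_inl, Function.comp_apply, tmap_inl,
          dif_pos h, Sum.map_inl, Sum.elim_inl]
        simp only [FW]
        rw [if_pos h]
      · rcases lt_or_ge (i:ℕ) (a+2) with h2 | h2
        · rw [dif_pos h2, Sum.map_inl, Function.comp_apply, tmap_inl,
            dif_neg (Nat.not_lt.mpr h), Sum.map_inr]
          simp only [FW]
          rw [if_neg (by omega), if_pos h2]
        · rw [dif_neg (by omega), Sum.map_inr, Sum.elim_inl]
          simp only [FW]
          rw [if_neg (by omega), if_neg (by omega)]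
    · rw [Function.comp_apply, tmap_inr]
      rcases lt_or_ge (j:ℕ) a with h | h
      · rw [dif_pos h, Sum.map_inl, Function.comp_apply, tmap_inr, dif_pos h,
          Sum.map_inl, Sum.elim_inr]
        simp only [FW]
        rw [if_pos h]
      · rw [dif_neg (by omega), Sum.map_inr, Sum.elim_inr]
        simp only [FW]
        rw [if_neg (by omega)]
  rw [hFW, hFW]

end Aux3
section Aux4

lemma capLemma (C : PartitionCategory) {m m' a b : ℕ} (hm : m = (a+2)+b) (hm' : m' = a+b)
    (p : PartitionKL 0 m) (hp : p ∈ C.mem 0 m) (s : Fin m)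
    (hs : ∀ y, p (Sum.inr s) y → y = Sum.inr s) (h1 : (s:ℕ) ≠ a) (h2 : (s:ℕ) ≠ a+1) :
    ∃ (q : PartitionKL 0 m') (s' : Fin m'), q ∈ C.mem 0 m' ∧
      (∀ y, q (Sum.inr s') y → y = Sum.inr s') ∧
      (s':ℕ) = (if (s:ℕ) < a then (s:ℕ) else (s:ℕ) - 2) := by
  subst hm; subst hm'
  have hsb : (s:ℕ) < (a+2)+b := s.isLt
  set s' : Fin (a+b) := ⟨if (s:ℕ) < a then (s:ℕ) else (s:ℕ) - 2, by split_ifs <;> omega⟩ with hs'def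
  have hvs' : (s':ℕ) = if (s:ℕ) < a then (s:ℕ) else (s:ℕ) - 2 := rfl
  refine ⟨compPart p (capW a b), s', C.comp_mem hp (capW_mem C a b), ?_, rfl⟩
  have hd : ((s:ℕ) < a ∧ (s':ℕ) = (s:ℕ)) ∨ (a + 2 ≤ (s:ℕ) ∧ (s':ℕ) = (s:ℕ) - 2) := by
    rcases lt_or_ge (s:ℕ) a with h | h
    · exact Or.inl ⟨h, by rw [hvs', if_pos h]⟩
    · exact Or.inr ⟨by omega, by rw [hvs', if_neg (by omega)]⟩
  clear_value s'
  clear hvs' hs'def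
  have claim1 : ∀ v, capW a b (Sum.inl s) v → (v = Sum.inl s ∨ v = Sum.inr s') := by
    intro v hv
    rw [capW_rel] at hv
    rcases v with j | j
    · left
      simp only [FW] at hv
      simp only [Sum.inl.injEq]
      rw [Fin.ext_iff]
      rcases hd with ⟨h, h'⟩ | ⟨h, h'⟩ <;>
        split_ifs at hv <;>
        simp only [Sum.inl.injEq, Sum.inr.injEq, reduceCtorEq] at hv <;>
        omega
    · right
      simp only [FW] at hv
      simp only [Sum.inr.injEq]
      rw [Fin.ext_iff]
      rcases hd with ⟨h, h'⟩ | ⟨h, h'⟩ <;>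
        split_ifs at hv <;>
        simp only [Sum.inl.injEq, Sum.inr.injEq, reduceCtorEq] at hv <;>
        omega
  have claim2 : ∀ v, capW a b (Sum.inr s') v → (v = Sum.inl s ∨ v = Sum.inr s') := by
    intro v hv
    rw [capW_rel] at hv
    rcases v with j | j
    · left
      simp only [FW] at hv
      simp only [Sum.inl.injEq]
      rw [Fin.ext_iff]
      rcases hd with ⟨h, h'⟩ | ⟨h, h'⟩ <;>
        split_ifs at hv <;>
        simp only [Sum.inl.injEq, Sum.inr.injEq, reduceCtorEq] at hv <;>
        omega
    · right
      simp only [FW] at hv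
      simp only [Sum.inr.injEq]
      rw [Fin.ext_iff]
      rcases hd with ⟨h, h'⟩ | ⟨h, h'⟩ <;>
        split_ifs at hv <;>
        simp only [Sum.inl.injEq, Sum.inr.injEq, reduceCtorEq] at hv <;>
        omega
  apply compPart_singleton p (capW a b) (Sum.inr s')
    (fun z => z = Sum.inr (Sum.inl s) ∨ z = Sum.inr (Sum.inr s'))
  · right; rfl
  · rintro (x | x | x) (y | y | y) e hφ
    · exact x.elim0
    · exact x.elim0
    · exact x.elim0
    · exact y.elim0
    · -- middle-middle
      simp only [midRel] at e
      simp only [Sum.inr.injEq, Sum.inl.injEq, reduceCtorEq, or_false, false_or] at hφ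
      subst hφ
      rcases e with e | e
      · have h := hs _ e
        simp only [Sum.inr.injEq] at h
        subst h
        left; rfl
      · rcases claim1 _ e with h | h
        · simp only [Sum.inl.injEq] at h; subst h; left; rfl
        · exact absurd h (by simp)
    · -- middle-bottom
      simp only [midRel] at e
      simp only [Sum.inr.injEq, Sum.inl.injEq, reduceCtorEq, or_false, false_or] at hφ
      subst hφ
      rcases claim1 _ e with h | h
      · exact absurd h (by simp)
      · simp only [Sum.inr.injEq] at h; subst h; right; rfl
    · exact y.elim0
    · -- bottom-middle
      simp only [midRel] at e
      simp only [Sum.inr.injEq, Sum.inl.injEq, reduceCtorEq, or_false, false_or] at hφ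
      subst hφ
      rcases claim2 _ e with h | h
      · simp only [Sum.inl.injEq] at h; subst h; left; rfl
      · exact absurd h (by simp)
    · -- bottom-bottom
      simp only [midRel] at e
      simp only [Sum.inr.injEq, Sum.inl.injEq, reduceCtorEq, or_false, false_or] at hφ
      subst hφ
      rcases claim2 _ e with h | h
      · exact absurd h (by simp)
      · simp only [Sum.inr.injEq] at h; subst h; right; rfl
  · rintro (y | y) hφ
    · exact y.elim0
    · simp only [Sum.map_inr, Sum.inr.injEq, Sum.inl.injEq, reduceCtorEq, false_or] at hφ
      rw [hφ]

end Aux4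
section Aux5

lemma base1 (C : PartitionCategory) (p : PartitionKL 0 1) (hp : p ∈ C.mem 0 1) :
    (⊤ : PartitionKL 0 1) ∈ C.mem 0 1 := by
  have he : (⊤ : PartitionKL 0 1) = p := by
    apply Setoid.ext
    rintro (x | x) (y | y)
    · exact x.elim0
    · exact x.elim0
    · exact y.elim0
    · constructor
      · intro _
        have hxy : x = y := Subsingleton.elim x y
        subst hxy
        exact p.refl _
      · intro _
        trivial
  rw [he]; exact hp

lemma base2 (C : PartitionCategory) (p : PartitionKL 0 2) (hp : p ∈ C.mem 0 2) (s : Fin 2)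
    (hs : ∀ y, p (Sum.inr s) y → y = Sum.inr s) :
    (⊥ : PartitionKL 0 2) ∈ C.mem 0 2 := by
  have hbot : ∀ u v : Fin 0 ⊕ Fin 2, (⊥ : PartitionKL 0 2) u v ↔ u = v := by
    intro u v
    rw [show ((⊥ : PartitionKL 0 2) u v ↔ u = v) ↔ (u = v ↔ u = v) from
      by rw [Setoid.bot_def]]
  have he : (⊥ : PartitionKL 0 2) = p := by
    apply Setoid.ext
    rintro (x | x) (y | y)
    · exact x.elim0
    · exact x.elim0
    · exact y.elim0
    · rw [hbot]
      constructor
      · intro h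
        rw [Sum.inr.injEq] at h
        subst h
        exact p.refl _
      · intro h
        by_cases hxs : x = s
        · subst hxs
          exact (hs _ h).symm
        · by_cases hys : y = s
          · subst hys
            exact hs _ (p.symm h)
          · have h1 : (x:ℕ) ≠ (s:ℕ) := fun hh => hxs (Fin.ext hh)
            have h2 : (y:ℕ) ≠ (s:ℕ) := fun hh => hys (Fin.ext hh)
            have h3 : (x:ℕ) < 2 := x.isLt
            have h4 : (y:ℕ) < 2 := y.isLt
            have h5 : (s:ℕ) < 2 := s.isLt
            rw [Sum.inr.injEq]
            exact Fin.ext (by omega)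
  rw [he]; exact hp

lemma tensorSingleton {l l' : ℕ} (p : PartitionKL 0 l) (q : PartitionKL 0 l') (t : Fin l')
    (hq : ∀ y, q (Sum.inr t) y → y = Sum.inr t) (u : Fin (l + l')) (hu : (u:ℕ) = l + (t:ℕ)) :
    ∀ y, tensorPart p q (Sum.inr u) y → y = Sum.inr u := by
  intro y hy
  rw [tensorPart_rel] at hy
  rcases y with i | j
  · exact i.elim0
  · rw [tmap_inr, tmap_inr, dif_neg (by omega : ¬((u:ℕ) < l))] at hy
    rcases lt_or_ge (j:ℕ) l with h | h
    · rw [dif_pos h] at hy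
      exact absurd hy (by rw [sideBySide_rl]; exact not_false)
    · rw [dif_neg (by omega), sideBySide_rr,
        show (⟨(u:ℕ) - l, by omega⟩ : Fin l') = t from Fin.ext (show (u:ℕ) - l = (t:ℕ) by omega)] at hy
      have hk := hq _ hy
      rw [Sum.inr.injEq] at hk
      have hv : (j:ℕ) - l = (t:ℕ) := by simpa using congrArg Fin.val hk
      rw [Sum.inr.injEq]
      exact (Fin.ext (by omega) : j = u)

lemma bottomLemma (C : PartitionCategory) : ∀ m (p : PartitionKL 0 m), p ∈ C.mem 0 m →
    ∀ s : Fin m, (∀ y, p (Sum.inr s) y → y = Sum.inr s) →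
    (⊤ : PartitionKL 0 1) ∈ C.mem 0 1 ∨ (⊥ : PartitionKL 0 2) ∈ C.mem 0 2 := by
  intro m
  induction m using Nat.strong_induction_on with
  | _ m ih =>
    intro p hp s hs
    rcases Nat.lt_or_ge m 3 with hm | hm
    · interval_cases m
      · exact s.elim0
      · exact Or.inl (base1 C p hp)
      · exact Or.inr (base2 C p hp s hs)
    · by_cases hs0 : (s:ℕ) = 0
      · obtain ⟨q, s', hq, hqs, _⟩ :=
          capLemma C (m' := m-2) (a := 1) (b := m-3) (by omega) (by omega)
            p hp s hs (by omega) (by omega)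
        exact ih (m-2) (by omega) q hq s' hqs
      · by_cases hs1 : (s:ℕ) = 1
        · rcases Nat.lt_or_ge m 4 with hm4 | hm4
          · have hm3 : m = 3 := by omega
            subst hm3
            have hq0 : tensorPart p p ∈ C.mem 0 6 := C.tensor_mem hp hp
            have hsing : ∀ y, tensorPart p p (Sum.inr (⟨4, by omega⟩ : Fin 6)) y →
                y = Sum.inr (⟨4, by omega⟩ : Fin 6) :=
              tensorSingleton p p s hs ⟨4, by omega⟩ (show (4:ℕ) = 3 + (s:ℕ) by omega)
            obtain ⟨q1, s1, hq1, hq1s, hv1⟩ :=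
              capLemma C (m := 6) (m' := 4) (a := 0) (b := 4) (by norm_num) (by norm_num)
                (tensorPart p p) hq0 ⟨4, by omega⟩ hsing (show (4:ℕ) ≠ 0 by decide) (show (4:ℕ) ≠ 0+1 by decide)
            have hv1' : (s1:ℕ) = 2 := by simpa using hv1
            obtain ⟨q2, s2, hq2, hq2s, _⟩ :=
              capLemma C (m := 4) (m' := 2) (a := 0) (b := 2) (by norm_num) (by norm_num)
                q1 hq1 s1 hq1s (by omega) (by omega)
            exact Or.inr (base2 C q2 hq2 s2 hq2s)
          · obtain ⟨q, s', hq, hqs, _⟩ :=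
              capLemma C (m' := m-2) (a := 2) (b := m-4) (by omega) (by omega)
                p hp s hs (by omega) (by omega)
            exact ih (m-2) (by omega) q hq s' hqs
        · obtain ⟨q, s', hq, hqs, _⟩ :=
            capLemma C (m' := m-2) (a := 0) (b := m-2) (by omega) (by omega)
              p hp s hs (by omega) (by omega)
          exact ih (m-2) (by omega) q hq s' hqs

end Aux5
section Aux6

lemma rotateLemma (C : PartitionCategory) {k l : ℕ} (p : PartitionKL (k+1) l)
    (hp : p ∈ C.mem (k+1) l) (x₀ : Fin (k+1) ⊕ Fin l) (hs : ∀ y, p x₀ y → y = x₀) :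
    ∃ (p' : PartitionKL k (l+1)) (x' : Fin k ⊕ Fin (l+1)), p' ∈ C.mem k (l+1) ∧
      ∀ y, p' x' y → y = x' := by
  set AP : PartitionKL k (k+2) := flipPart (capW k 0) with hAdef
  set BP := tensorPart (k := k+1) (k' := 1) p (⊤ : PartitionKL 1 1) with hBdef
  have hA : AP ∈ C.mem k (k+2) := C.flip_mem (capW_mem C k 0)
  have hB : BP ∈ C.mem ((k+1)+1) (l+1) := C.tensor_mem hp C.id_mem
  have hArel : ∀ x y, AP x y ↔ FW k 0 (Sum.swap x) = FW k 0 (Sum.swap y) := by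
    intro x y
    exact capW_rel k 0 (Sum.swap x) (Sum.swap y)
  have factA1 : ∀ (i : Fin k) v, AP (Sum.inl i) v →
      (v = Sum.inl i ∨ v = Sum.inr (⟨(i:ℕ), by omega⟩ : Fin (k+2))) := by
    intro i v hv
    rw [hArel] at hv
    rcases v with b | b <;>
      simp only [Sum.swap_inl, Sum.swap_inr, FW] at hv <;>
      split_ifs at hv <;>
      simp only [Sum.inl.injEq, Sum.inr.injEq, reduceCtorEq] at hv <;>
      simp only [Sum.inl.injEq, Sum.inr.injEq, reduceCtorEq, or_false, false_or,
        Fin.ext_iff] <;>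
      omega
  have factA2 : ∀ (j : Fin (k+2)) v, k ≤ (j:ℕ) → AP (Sum.inr j) v →
      (v = Sum.inr (⟨k, by omega⟩ : Fin (k+2)) ∨
       v = Sum.inr (⟨k+1, by omega⟩ : Fin (k+2))) := by
    intro j v hj hv
    rw [hArel] at hv
    rcases v with b | b <;>
      simp only [Sum.swap_inl, Sum.swap_inr, FW] at hv <;>
      split_ifs at hv <;>
      simp only [Sum.inl.injEq, Sum.inr.injEq, reduceCtorEq] at hv <;>
      simp only [Sum.inl.injEq, Sum.inr.injEq, reduceCtorEq, or_false, false_or,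
        Fin.ext_iff] <;>
      omega
  have factA3 : ∀ (j : Fin (k+2)) v (hj : (j:ℕ) < k), AP (Sum.inr j) v →
      (v = Sum.inl (⟨(j:ℕ), hj⟩ : Fin k) ∨ v = Sum.inr j) := by
    intro j v hj hv
    rw [hArel] at hv
    rcases v with b | b <;>
      simp only [Sum.swap_inl, Sum.swap_inr, FW] at hv <;>
      split_ifs at hv <;>
      simp only [Sum.inl.injEq, Sum.inr.injEq, reduceCtorEq] at hv <;>
      simp only [Sum.inl.injEq, Sum.inr.injEq, reduceCtorEq, or_false, false_or,
        Fin.ext_iff] <;>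
      omega
  rcases x₀ with i | t
  · -- the singleton is an upper point of p
    have factBu : ∀ v, BP (Sum.inl (Fin.castSucc i)) v → v = Sum.inl (Fin.castSucc i) := by
      intro v hv
      rw [hBdef, tensorPart_rel, tmap_inl] at hv
      simp only [Fin.coe_castSucc] at hv
      rw [dif_pos i.isLt,
        show (⟨(i:ℕ), i.isLt⟩ : Fin (k+1)) = i from Fin.ext rfl] at hv
      rcases v with b | b
      · rw [tmap_inl] at hv
        split_ifs at hv with hb
        · rw [sideBySide_ll] at hv
          have hk2 := hs _ hv
          rw [Sum.inl.injEq] at hk2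
          have hv2 : (b:ℕ) = (i:ℕ) := congrArg Fin.val hk2
          rw [Sum.inl.injEq]
          exact Fin.ext hv2
        · rw [sideBySide_lr] at hv
          exact hv.elim
      · rw [tmap_inr] at hv
        split_ifs at hv with hb
        · rw [sideBySide_ll] at hv
          exact absurd (hs _ hv) (by simp)
        · rw [sideBySide_lr] at hv
          exact hv.elim
    by_cases hik : (i:ℕ) < k
    · -- not the rightmost upper point
      refine ⟨compPart AP BP, Sum.inl (⟨(i:ℕ), hik⟩ : Fin k), C.comp_mem hA hB, ?_⟩
      apply compPart_singleton AP BP _ (fun z =>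
        z = Sum.inl (⟨(i:ℕ), hik⟩ : Fin k) ∨ z = Sum.inr (Sum.inl (Fin.castSucc i)))
      · exact Or.inl rfl
      · rintro (x | x | x) (y | y | y) e hφ
        · -- up up
          simp only [midRel] at e
          simp only [Sum.inl.injEq, Sum.inr.injEq, reduceCtorEq, or_false, false_or] at hφ
          subst hφ
          rcases factA1 _ _ e with h | h
          · rw [Sum.inl.injEq] at h
            exact Or.inl (by rw [h])
          · exact absurd h (by simp)
        · -- up mid
          simp only [midRel] at e
          simp only [Sum.inl.injEq, Sum.inr.injEq, reduceCtorEq, or_false, false_or] at hφ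
          subst hφ
          rcases factA1 _ _ e with h | h
          · exact absurd h (by simp)
          · rw [Sum.inr.injEq] at h
            subst h
            exact Or.inr (congrArg (fun w => Sum.inr (Sum.inl w)) (Fin.ext rfl))
        · -- up bottom
          simp only [midRel] at e
        · -- mid up
          simp only [midRel] at e
          simp only [Sum.inl.injEq, Sum.inr.injEq, reduceCtorEq, or_false, false_or] at hφ
          subst hφ
          rcases factA3 _ _ (show ((Fin.castSucc i):ℕ) < k from hik) e with h | h
          · rw [Sum.inl.injEq] at h
            subst h
            exact Or.inl (congrArg Sum.inl (Fin.ext rfl))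
          · exact absurd h (by simp)
        · -- mid mid
          simp only [midRel] at e
          simp only [Sum.inl.injEq, Sum.inr.injEq, reduceCtorEq, or_false, false_or] at hφ
          subst hφ
          rcases e with e | e
          · rcases factA3 _ _ (show ((Fin.castSucc i):ℕ) < k from hik) e with h | h
            · exact absurd h (by simp)
            · rw [Sum.inr.injEq] at h
              exact Or.inr (by rw [h])
          · have h := factBu _ e
            rw [Sum.inl.injEq] at h
            exact Or.inr (by rw [h])
        · -- mid bottom
          simp only [midRel] at e
          simp only [Sum.inl.injEq, Sum.inr.injEq, reduceCtorEq, or_false, false_or] at hφ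
          subst hφ
          exact absurd (factBu _ e) (by simp)
        · -- bottom up
          simp only [midRel] at e
        · -- bottom mid
          simp only [Sum.inl.injEq, Sum.inr.injEq, reduceCtorEq, or_false, false_or,
            or_self] at hφ
        · -- bottom bottom
          simp only [Sum.inl.injEq, Sum.inr.injEq, reduceCtorEq, or_false, false_or,
            or_self] at hφ
      · rintro (y | y) hφ
        · simp only [Sum.map_inl, id_eq, Sum.inl.injEq, Sum.inr.injEq, reduceCtorEq,
            or_false, false_or] at hφ
          rw [hφ]
        · simp only [Sum.map_inr, Sum.inl.injEq, Sum.inr.injEq, reduceCtorEq,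
            or_false, false_or, or_self] at hφ
    · -- the rightmost upper point rotates to the new last lower point
      have hik2 : (i:ℕ) = k := by have := i.isLt; omega
      have hcast : (⟨k, by omega⟩ : Fin (k+2)) = Fin.castSucc i :=
        Fin.ext (by simp [hik2])
      have factBs1 : ∀ v, BP (Sum.inl (Fin.last (k+1))) v →
          (v = Sum.inl (Fin.last (k+1)) ∨
           v = Sum.inr (Fin.last l)) := by
        intro v hv
        rw [hBdef, tensorPart_rel, tmap_inl] at hv
        simp only [Fin.val_last] at hv
        rw [dif_neg (show ¬(k+1 < k+1) by omega)] at hv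
        rcases v with b | b
        · rw [tmap_inl] at hv
          split_ifs at hv with hb
          · rw [sideBySide_rl] at hv
            exact hv.elim
          · left
            rw [Sum.inl.injEq]
            exact Fin.ext (show (b:ℕ) = k+1 by have := b.isLt; omega)
        · rw [tmap_inr] at hv
          split_ifs at hv with hb
          · rw [sideBySide_rl] at hv
            exact hv.elim
          · right
            rw [Sum.inr.injEq]
            exact Fin.ext (show (b:ℕ) = l by have := b.isLt; omega)
      have factBs2 : ∀ v, BP (Sum.inr (Fin.last l)) v →
          (v = Sum.inl (Fin.last (k+1)) ∨
           v = Sum.inr (Fin.last l)) := by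
        intro v hv
        rw [hBdef, tensorPart_rel, tmap_inr] at hv
        simp only [Fin.val_last] at hv
        rw [dif_neg (show ¬(l < l) by omega)] at hv
        rcases v with b | b
        · rw [tmap_inl] at hv
          split_ifs at hv with hb
          · rw [sideBySide_rl] at hv
            exact hv.elim
          · left
            rw [Sum.inl.injEq]
            exact Fin.ext (show (b:ℕ) = k+1 by have := b.isLt; omega)
        · rw [tmap_inr] at hv
          split_ifs at hv with hb
          · rw [sideBySide_rl] at hv
            exact hv.elim
          · right
            rw [Sum.inr.injEq]
            exact Fin.ext (show (b:ℕ) = l by have := b.isLt; omega)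
      refine ⟨compPart AP BP, Sum.inr (Fin.last l), C.comp_mem hA hB, ?_⟩
      apply compPart_singleton AP BP _ (fun z =>
        z = Sum.inr (Sum.inl (⟨k, by omega⟩ : Fin (k+2))) ∨
        z = Sum.inr (Sum.inl (Fin.last (k+1) : Fin (k+2))) ∨
        z = Sum.inr (Sum.inr (Fin.last l)))
      · exact Or.inr (Or.inr rfl)
      · rintro (x | x | x) (y | y | y) e hφ
        · simp only [Sum.inl.injEq, Sum.inr.injEq, reduceCtorEq, or_false, false_or,
            or_self] at hφ
        · simp only [Sum.inl.injEq, Sum.inr.injEq, reduceCtorEq, or_false, false_or,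
            or_self] at hφ
        · simp only [Sum.inl.injEq, Sum.inr.injEq, reduceCtorEq, or_false, false_or,
            or_self] at hφ
        · -- mid up
          simp only [midRel] at e
          simp only [Sum.inl.injEq, Sum.inr.injEq, reduceCtorEq, or_false, false_or] at hφ
          rcases hφ with hφ | hφ <;> subst hφ
          · rcases factA2 _ _ (Nat.le_refl k) e with h | h <;> exact absurd h (by simp)
          · rcases factA2 _ _ (show k ≤ k+1 by omega) e with h | h <;> exact absurd h (by simp)
        · -- mid mid
          simp only [midRel] at e
          simp only [Sum.inl.injEq, Sum.inr.injEq, reduceCtorEq, or_false, false_or] at hφ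
          rcases hφ with hφ | hφ <;> subst hφ
          · rcases e with e | e
            · rcases factA2 _ _ (Nat.le_refl k) e with h | h
              · rw [Sum.inr.injEq] at h
                subst h
                exact Or.inl (congrArg (fun w => Sum.inr (Sum.inl w)) (Fin.ext rfl))
              · rw [Sum.inr.injEq] at h
                subst h
                exact Or.inr (Or.inl (congrArg (fun w => Sum.inr (Sum.inl w)) (Fin.ext rfl)))
            · rw [hcast] at e
              have h := factBu _ e
              rw [Sum.inl.injEq] at h
              subst h
              exact Or.inl (congrArg (fun w => Sum.inr (Sum.inl w)) (Fin.ext hik2))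
          · rcases e with e | e
            · rcases factA2 _ _ (show k ≤ k+1 by omega) e with h | h
              · rw [Sum.inr.injEq] at h
                subst h
                exact Or.inl (congrArg (fun w => Sum.inr (Sum.inl w)) (Fin.ext rfl))
              · rw [Sum.inr.injEq] at h
                subst h
                exact Or.inr (Or.inl (congrArg (fun w => Sum.inr (Sum.inl w)) (Fin.ext rfl)))
            · rcases factBs1 _ e with h | h
              · rw [Sum.inl.injEq] at h
                subst h
                exact Or.inr (Or.inl rfl)
              · exact absurd h (by simp)
        · -- mid bottom
          simp only [midRel] at e
          simp only [Sum.inl.injEq, Sum.inr.injEq, reduceCtorEq, or_false, false_or] at hφ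
          rcases hφ with hφ | hφ <;> subst hφ
          · rw [hcast] at e
            exact absurd (factBu _ e) (by simp)
          · rcases factBs1 _ e with h | h
            · exact absurd h (by simp)
            · rw [Sum.inr.injEq] at h
              subst h
              exact Or.inr (Or.inr rfl)
        · -- bottom up
          simp only [midRel] at e
        · -- bottom mid
          simp only [midRel] at e
          simp only [Sum.inl.injEq, Sum.inr.injEq, reduceCtorEq, or_false, false_or] at hφ
          subst hφ
          rcases factBs2 _ e with h | h
          · rw [Sum.inl.injEq] at h
            subst h
            exact Or.inr (Or.inl rfl)
          · exact absurd h (by simp)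
        · -- bottom bottom
          simp only [midRel] at e
          simp only [Sum.inl.injEq, Sum.inr.injEq, reduceCtorEq, or_false, false_or] at hφ
          subst hφ
          rcases factBs2 _ e with h | h
          · exact absurd h (by simp)
          · rw [Sum.inr.injEq] at h
            subst h
            exact Or.inr (Or.inr rfl)
      · rintro (y | y) hφ
        · simp only [Sum.map_inl, Sum.inl.injEq, Sum.inr.injEq, reduceCtorEq,
            or_false, false_or, or_self] at hφ
        · simp only [Sum.map_inr, Sum.inl.injEq, Sum.inr.injEq, reduceCtorEq,
            or_false, false_or] at hφ
          rw [hφ]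
  · -- the singleton is a lower point of p
    have factBt : ∀ v, BP (Sum.inr (Fin.castSucc t)) v → v = Sum.inr (Fin.castSucc t) := by
      intro v hv
      rw [hBdef, tensorPart_rel, tmap_inr] at hv
      simp only [Fin.coe_castSucc] at hv
      rw [dif_pos t.isLt,
        show (⟨(t:ℕ), t.isLt⟩ : Fin l) = t from Fin.ext rfl] at hv
      rcases v with b | b
      · rw [tmap_inl] at hv
        split_ifs at hv with hb
        · rw [sideBySide_ll] at hv
          exact absurd (hs _ hv) (by simp)
        · rw [sideBySide_lr] at hv
          exact hv.elim
      · rw [tmap_inr] at hv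
        split_ifs at hv with hb
        · rw [sideBySide_ll] at hv
          have hk2 := hs _ hv
          rw [Sum.inr.injEq] at hk2
          have hv2 : (b:ℕ) = (t:ℕ) := congrArg Fin.val hk2
          rw [Sum.inr.injEq]
          exact Fin.ext hv2
        · rw [sideBySide_lr] at hv
          exact hv.elim
    refine ⟨compPart AP BP, Sum.inr (Fin.castSucc t), C.comp_mem hA hB, ?_⟩
    apply compPart_singleton AP BP _ (fun z => z = Sum.inr (Sum.inr (Fin.castSucc t)))
    · rfl
    · rintro (x | x | x) (y | y | y) e hφ
      · exact absurd hφ (by simp)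
      · exact absurd hφ (by simp)
      · exact absurd hφ (by simp)
      · exact absurd hφ (by simp)
      · exact absurd hφ (by simp)
      · exact absurd hφ (by simp)
      · simp only [midRel] at e
      · simp only [midRel] at e
        simp only [Sum.inr.injEq] at hφ
        subst hφ
        exact absurd (factBt _ e) (by simp)
      · simp only [midRel] at e
        simp only [Sum.inr.injEq] at hφ
        subst hφ
        have h := factBt _ e
        rw [Sum.inr.injEq] at h
        rw [h]
    · rintro (y | y) hφ
      · exact absurd hφ (by simp)
      · simp only [Sum.map_inr, Sum.inr.injEq] at hφ
        rw [hφ]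

end Aux6

/-- If a category of partitions contains a partition with a singleton block,
then it contains the singleton partition (one lower point) or the double
singleton partition (two lower points, in distinct blocks). -/
theorem singleton_or_double_singleton_mem (C : PartitionCategory)
    (h : ∃ k l, ∃ p ∈ C.mem k l, HasSingletonBlock p) :
    (⊤ : PartitionKL 0 1) ∈ C.mem 0 1 ∨ (⊥ : PartitionKL 0 2) ∈ C.mem 0 2 := by
  obtain ⟨k, l, p, hp, hsing⟩ := h
  have hsing' : ∃ x, ∀ y, p x y → y = x := hsing
  clear hsing
  suffices H : ∀ k l (p : PartitionKL k l), p ∈ C.mem k l →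
      (∃ x, ∀ y, p x y → y = x) →
      ((⊤ : PartitionKL 0 1) ∈ C.mem 0 1 ∨ (⊥ : PartitionKL 0 2) ∈ C.mem 0 2) by
    exact H k l p hp hsing'
  clear hp hsing' p
  intro k
  induction k with
  | zero =>
    intro l p hp hx
    obtain ⟨x, hx⟩ := hx
    rcases x with i | s
    · exact i.elim0
    · exact bottomLemma C l p hp s hx
  | succ k ih =>
    intro l p hp hx
    obtain ⟨x, hx⟩ := hx
    obtain ⟨p', x', hp', hx'⟩ := rotateLemma C p hp x hx
    exact ih (l+1) p' hp' ⟨x', hx'⟩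
end

section
/- If a category of partitions D contains a partition with an odd total number of legs, then D contains the singleton partition. -/
/-! Only the nonemptiness of the sets `D(k,l)` matters: composing with the cups
`id_n ⊗ ∩ ∈ D(n, n+2)` (and their flips) lowers either row by two points, so an odd
number of legs leads to `D(0,1)` or `D(1,0)` being nonempty, and turning upside down
gives `D(0,1)`. But `P(0,1)` has only one element, the singleton. -/

theorem Setoid.eq_top_of_subsingleton {α : Type*} [Subsingleton α] (s : Setoid α) : s = ⊤ :=
  Setoid.eq_top_iff.mpr fun x y => Subsingleton.elim x y ▸ s.refl x

theorem PartitionKL.eq_top_zero_one (p : PartitionKL 0 1) : p = ⊤ :=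
  have : Subsingleton (Fin 0 ⊕ Fin 1) := (Equiv.emptySum (Fin 0) (Fin 1)).subsingleton
  p.eq_top_of_subsingleton

namespace PartitionCategory

variable (C : PartitionCategory)

theorem nonempty_mem_self : ∀ n, (C.mem n n).Nonempty
  | 0 => ⟨_, C.comp_mem C.semicircle_mem (C.flip_mem C.semicircle_mem)⟩
  | n + 1 =>
    have ⟨_, hp⟩ := nonempty_mem_self n
    ⟨_, C.tensor_mem hp C.id_mem⟩

theorem nonempty_mem_add_two (n : ℕ) : (C.mem n (n + 2)).Nonempty :=
  have ⟨_, hp⟩ := C.nonempty_mem_self n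
  ⟨_, C.tensor_mem hp C.semicircle_mem⟩

variable {C}

theorem nonempty_mem_of_nonempty_mem_add_two_upper {k l : ℕ}
    (h : (C.mem (k + 2) l).Nonempty) : (C.mem k l).Nonempty :=
  have ⟨_, hp⟩ := h
  have ⟨_, hcup⟩ := C.nonempty_mem_add_two k
  ⟨_, C.comp_mem hcup hp⟩

theorem nonempty_mem_of_nonempty_mem_add_two_lower {k l : ℕ}
    (h : (C.mem k (l + 2)).Nonempty) : (C.mem k l).Nonempty :=
  have ⟨_, hp⟩ := h
  have ⟨_, hcup⟩ := C.nonempty_mem_add_two l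
  ⟨_, C.comp_mem hp (C.flip_mem hcup)⟩

theorem nonempty_mem_mod_two_upper : ∀ {k l : ℕ},
    (C.mem k l).Nonempty → (C.mem (k % 2) l).Nonempty
  | 0, _, h | 1, _, h => h
  | k + 2, _, h => by
    rw [Nat.add_mod_right]
    exact nonempty_mem_mod_two_upper (nonempty_mem_of_nonempty_mem_add_two_upper h)

theorem nonempty_mem_mod_two_lower : ∀ {k l : ℕ},
    (C.mem k l).Nonempty → (C.mem k (l % 2)).Nonempty
  | _, 0, h | _, 1, h => h
  | _, l + 2, h => by
    rw [Nat.add_mod_right]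
    exact nonempty_mem_mod_two_lower (nonempty_mem_of_nonempty_mem_add_two_lower h)

theorem nonempty_mem_mod_two {k l : ℕ} (h : (C.mem k l).Nonempty) :
    (C.mem (k % 2) (l % 2)).Nonempty :=
  nonempty_mem_mod_two_lower (nonempty_mem_mod_two_upper h)

end PartitionCategory

/-- If a category of partitions contains a partition with an odd total number
of legs, then it contains the singleton partition (one lower point). -/
theorem singleton_mem_of_odd_legs (C : PartitionCategory)
    (h : ∃ k l, ∃ p, p ∈ C.mem k l ∧ Odd (k + l)) :
    (⊤ : PartitionKL 0 1) ∈ C.mem 0 1 := by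
  obtain ⟨k, l, p, hp, hodd⟩ := h
  have hmod := PartitionCategory.nonempty_mem_mod_two ⟨p, hp⟩
  have hparity := Nat.odd_iff.mp hodd
  rcases Nat.mod_two_eq_zero_or_one k with hk | hk
  · rw [hk, show l % 2 = 1 by omega] at hmod
    obtain ⟨q, hq⟩ := hmod
    exact q.eq_top_zero_one ▸ hq
  · rw [hk, show l % 2 = 0 by omega] at hmod
    obtain ⟨q, hq⟩ := hmod
    exact (flipPart q).eq_top_zero_one ▸ C.flip_mem hq
end

section
/- The k-cubic relations imply the 2k-cubic relations: if elements u_{ij} of a *-algebra satisfy a c_1⋯c_k b = 0 for all a ≠ b on the same row or column of the matrix u = (u_{ij}) and all c_1,...,c_k ∈ {u_{ij}}, then they also satisfy a c_1⋯c_{2k} b = 0 under the same conditions, provided u is orthogonal (uu^t = u^t u = 1 with u_{ij} self-adjoint). -/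
open scoped BigOperators

/-- The word `u_{c₁} ⋯ u_{c_k}` in the generators. -/
def word {A : Type*} [Ring A] {n : ℕ} (u : Fin n → Fin n → A)
    {k : ℕ} (c : Fin k → Fin n × Fin n) : A :=
  (List.ofFn fun r => u (c r).1 (c r).2).prod

/-- The `k`-cubic relations: `a c₁ ⋯ c_k b = 0` whenever `a ≠ b` are entries on
the same row or on the same column of `u`, and `c₁,…,c_k` are arbitrary
generators. -/
def KCubic {A : Type*} [Ring A] {n : ℕ} (u : Fin n → Fin n → A) (k : ℕ) : Prop :=
  ∀ c : Fin k → Fin n × Fin n,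
    (∀ i j l, j ≠ l → u i j * word u c * u i l = 0) ∧
    (∀ i j l, j ≠ l → u j i * word u c * u l i = 0)

def SandwichVanishes {A ι : Type*} [Ring A] (v : ι → A) (w : A) : Prop :=
  ∀ j l, j ≠ l → v j * w * v l = 0

/-- Inserting `1 = ∑ m, v m * v m` between `w₁` and `w₂` splits the product into terms
`(v j * w₁ * v m) * (v m * w₂ * v l)`, and one of the two factors vanishes unless `j = m = l`. -/
theorem SandwichVanishes.mul {A ι : Type*} [Ring A] [Fintype ι] {v : ι → A} {w₁ w₂ : A}
    (hv : ∑ m, v m * v m = 1) (h₁ : SandwichVanishes v w₁) (h₂ : SandwichVanishes v w₂) :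
    SandwichVanishes v (w₁ * w₂) := by
  intro j l hjl
  have hsplit : v j * (w₁ * w₂) * v l = ∑ m, (v j * w₁ * v m) * (v m * w₂ * v l) := by
    simp only [← mul_assoc, ← Finset.sum_mul]
    simp only [mul_assoc, ← Finset.mul_sum, hv, mul_one]
  rw [hsplit]
  refine Finset.sum_eq_zero fun m _ => ?_
  obtain rfl | hjm := eq_or_ne j m
  · rw [h₂ j l hjl, mul_zero]
  · rw [h₁ j m hjm, zero_mul]

theorem exists_word_eq_mul_word {A : Type*} [Ring A] {n : ℕ} (u : Fin n → Fin n → A)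
    {m k l : ℕ} (h : m = k + l) (c : Fin m → Fin n × Fin n) :
    ∃ (c₁ : Fin k → Fin n × Fin n) (c₂ : Fin l → Fin n × Fin n),
      word u c = word u c₁ * word u c₂ := by
  subst h
  refine ⟨fun r => c (Fin.castAdd l r), fun r => c (Fin.natAdd k r), ?_⟩
  simp only [word, List.ofFn_add, List.prod_append]
  rfl

theorem kCubic_imp_two_kCubic_general {A : Type*} [Ring A] {n : ℕ}
    (u : Fin n → Fin n → A)
    (horth_row : ∀ i j, ∑ m, u i m * u j m = if i = j then (1 : A) else 0)
    (horth_col : ∀ i j, ∑ m, u m i * u m j = if i = j then (1 : A) else 0)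
    (k : ℕ) (hk : KCubic u k) : KCubic u (2 * k) := by
  intro c
  obtain ⟨c₁, c₂, hc⟩ := exists_word_eq_mul_word u (two_mul k) c
  rw [hc]
  exact ⟨fun i => SandwichVanishes.mul (by simpa using horth_row i i) ((hk c₁).1 i) ((hk c₂).1 i),
    fun i => SandwichVanishes.mul (by simpa using horth_col i i) ((hk c₁).2 i) ((hk c₂).2 i)⟩

/-- For a matrix of self-adjoint generators that is orthogonal, the `k`-cubic
relations imply the `2k`-cubic relations. -/
theorem kCubic_imp_two_kCubic {A : Type*} [Ring A] [StarRing A] {n : ℕ}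
    (u : Fin n → Fin n → A)
    (hsa : ∀ i j, star (u i j) = u i j)
    (horth_row : ∀ i j, ∑ m, u i m * u j m = if i = j then (1 : A) else 0)
    (horth_col : ∀ i j, ∑ m, u m i * u m j = if i = j then (1 : A) else 0)
    (k : ℕ) (hk : KCubic u k) : KCubic u (2 * k) :=
  kCubic_imp_two_kCubic_general u horth_row horth_col k hk
end

section
/- The k-cubic relations imply the (k−1)-cubic relations for k ≥ 1, for self-adjoint orthogonal matrices of generators: if a c_1⋯c_k b = 0 for all a ≠ b in the same row or column and all words c_1,...,c_k in the generators, then a c_1⋯c_{k−1} b = 0 likewise. -/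
/-!
Write `a = u i j`, `b = u i l` with `j ≠ l` and let `w` be a word of length `k - 1`.
Contracting with the row relation, `a w b = ∑ₘ a (w b) (u i m) (u i m)`, and every term
with `m ≠ j` is a `k`-cubic relation, so only `a w b a` is left. Contracting instead with
the column relation `∑ₘ (u m l) (u m j) = 0`, we get `0 = ∑ₘ a (w (u m l)) (u m j)`, where
every term with `m ≠ i` is a `k`-cubic relation, so `a w b a = 0`. The column case is the
row case of the transposed matrix.
-/

open scoped BigOperators

lemma word_snoc {A : Type*} [Ring A] {n : ℕ} (u : Fin n → Fin n → A) {k : ℕ}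
    (c : Fin k → Fin n × Fin n) (p : Fin n × Fin n) :
    word u (Fin.snoc c p) = word u c * u p.1 p.2 := by
  rw [word, word, List.ofFn_succ']
  simp [Fin.snoc_castSucc, Fin.snoc_last]

open Finset Matrix

namespace Matrix

variable {ι A : Type*} [Ring A]

def CubicRel (u : Matrix ι ι A) (w : A) : Prop :=
  (∀ i j l, j ≠ l → u i j * w * u i l = 0) ∧ (∀ i j l, j ≠ l → u j i * w * u l i = 0)

lemma cubicRel_transpose_iff {u : Matrix ι ι A} {w : A} : CubicRel uᵀ w ↔ CubicRel u w :=
  and_comm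

variable [Fintype ι] [DecidableEq ι] {u : Matrix ι ι A} {w : A}

lemma CubicRel.row_of_forall_mul (hrow : u * uᵀ = 1) (hcol : uᵀ * u = 1)
    (h : ∀ a b, CubicRel u (w * u a b)) {i j l : ι} (hjl : j ≠ l) :
    u i j * w * u i l = 0 := by
  have corner : u i j * w * u i l * u i j = 0 := by
    have hsum : ∑ m, u i j * w * u m l * u m j = 0 := by
      simp_rw [mul_assoc (u i j * w), ← mul_sum]
      simpa [mul_apply, one_apply, hjl.symm] using
        congr_arg (u i j * w * ·) (congr_fun₂ hcol l j)
    rwa [sum_eq_single_of_mem i (mem_univ i) fun m _ hmi => by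
      simpa only [mul_assoc] using (h m l).2 j i m hmi.symm] at hsum
  calc u i j * w * u i l
      = u i j * w * u i l * (u * uᵀ) i i := by simp [hrow]
    _ = ∑ m, u i j * (w * u i l) * u i m * u i m := by
        simp only [mul_apply, transpose_apply, mul_sum, mul_assoc]
    _ = 0 := sum_eq_zero fun m _ => by
        rcases eq_or_ne m j with rfl | hmj
        · rw [← mul_assoc _ w, corner, zero_mul]
        · rw [(h i l).1 i j m hmj.symm, zero_mul]

lemma CubicRel.of_forall_mul (hrow : u * uᵀ = 1) (hcol : uᵀ * u = 1)
    (h : ∀ a b, CubicRel u (w * u a b)) : CubicRel u w :=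
  ⟨fun _ _ _ => row_of_forall_mul hrow hcol h,
    fun _ _ _ => row_of_forall_mul (u := uᵀ) (by simpa using hcol) (by simpa using hrow)
      fun a b => cubicRel_transpose_iff.2 (h b a)⟩

end Matrix

theorem kCubic_imp_pred_kCubic_general {A : Type*} [Ring A] {n : ℕ}
    (u : Fin n → Fin n → A)
    (horth_row : ∀ i j, ∑ m, u i m * u j m = if i = j then (1 : A) else 0)
    (horth_col : ∀ i j, ∑ m, u m i * u m j = if i = j then (1 : A) else 0)
    (k : ℕ) (hk1 : 1 ≤ k) (hk : KCubic u k) : KCubic u (k - 1) := by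
  obtain ⟨k, rfl⟩ := Nat.exists_eq_add_of_le' hk1
  have hrow : of u * (of u)ᵀ = 1 := ext fun i j => by
    rw [mul_apply, one_apply]; exact horth_row i j
  have hcol : (of u)ᵀ * of u = 1 := ext fun i j => by
    rw [mul_apply, one_apply]; exact horth_col i j
  intro c
  refine CubicRel.of_forall_mul hrow hcol fun a b => ?_
  have hk' := hk (Fin.snoc c (a, b))
  rwa [word_snoc] at hk'

/-- For a matrix of self-adjoint generators that is orthogonal, the `k`-cubic
relations imply the `(k-1)`-cubic relations, for `k ≥ 1`. -/
theorem kCubic_imp_pred_kCubic {A : Type*} [Ring A] [StarRing A] {n : ℕ}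
    (u : Fin n → Fin n → A)
    (hsa : ∀ i j, star (u i j) = u i j)
    (horth_row : ∀ i j, ∑ m, u i m * u j m = if i = j then (1 : A) else 0)
    (horth_col : ∀ i j, ∑ m, u m i * u m j = if i = j then (1 : A) else 0)
    (k : ℕ) (hk1 : 1 ≤ k) (hk : KCubic u k) : KCubic u (k - 1) :=
  kCubic_imp_pred_kCubic_general u horth_row horth_col k hk1 hk
end

section
/- In a *-algebra generated by self-adjoint elements u_{ij} forming an orthogonal matrix, the half-commutation relations abc = cba (for all a,b,c among the generators) together with the cubic relations (u_{ij}u_{ik} = 0 = u_{ji}u_{ki} for j ≠ k) imply the ultracubic relations: a c b = 0 for all a ≠ b on the same row or column of u and every generator c. -/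
/-!
Orthogonality and cubicity make every generator `b` tripotent: `b = (∑ₘ u_{im}²) b = b³`,
since `u_{im} b = 0` for the other entries `u_{im}` of its row (or column). Half-commutation
moves `b²` past any generator `c`, so `a c b = a c b³ = a b² c b = (a b) (b c b) = 0`.
-/

open Finset

section Tripotent

variable {R ι : Type*} [Semiring R] [Fintype ι]

theorem mul_self_mul_eq_self_of_sum_mul_self_eq_one {x : ι → R} (hsum : ∑ m, x m * x m = 1)
    {l : ι} (horth : ∀ m, m ≠ l → x m * x l = 0) : x l * x l * x l = x l := by
  calc x l * x l * x l = ∑ m, x m * x m * x l := by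
        rw [sum_eq_single_of_mem l (mem_univ l) fun m _ hm ↦ by
          rw [mul_assoc, horth m hm, mul_zero]]
    _ = x l := by rw [← sum_mul, hsum, one_mul]

theorem mul_mul_eq_zero_of_mul_eq_zero_of_tripotent {a b c : R} (hab : a * b = 0)
    (hb : b * b * b = b) (hc : c * b * b = b * b * c) : a * c * b = 0 := by
  calc a * c * b = a * c * (b * b * b) := by rw [hb]
    _ = a * (c * b * b) * b := by simp only [mul_assoc]
    _ = a * b * (b * c * b) := by rw [hc]; simp only [mul_assoc]
    _ = 0 := by rw [hab, zero_mul]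

end Tripotent

theorem halfComm_cubic_imp_ultracubic_general {A : Type*} [Ring A] {n : ℕ}
    (u : Fin n → Fin n → A)
    (horth_row : ∀ i j, ∑ m, u i m * u j m = if i = j then (1 : A) else 0)
    (horth_col : ∀ i j, ∑ m, u m i * u m j = if i = j then (1 : A) else 0)
    (hcubic_row : ∀ i j k, j ≠ k → u i j * u i k = 0)
    (hcubic_col : ∀ i j k, j ≠ k → u j i * u k i = 0)
    (hhalf : ∀ a b c : Fin n × Fin n,
      u a.1 a.2 * u b.1 b.2 * u c.1 c.2 = u c.1 c.2 * u b.1 b.2 * u a.1 a.2) :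
    ∀ (i j l : Fin n) (c : Fin n × Fin n), j ≠ l →
      u i j * u c.1 c.2 * u i l = 0 ∧ u j i * u c.1 c.2 * u l i = 0 := by
  intro i j l c hjl
  have hrow : u i l * u i l * u i l = u i l :=
    mul_self_mul_eq_self_of_sum_mul_self_eq_one (x := u i) (by simpa using horth_row i i)
      (hcubic_row i · l)
  have hcol : u l i * u l i * u l i = u l i :=
    mul_self_mul_eq_self_of_sum_mul_self_eq_one (x := fun m ↦ u m i)
      (by simpa using horth_col i i) (hcubic_col i · l)
  exact ⟨mul_mul_eq_zero_of_mul_eq_zero_of_tripotent (hcubic_row i j l hjl) hrow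
      (hhalf c (i, l) (i, l)),
    mul_mul_eq_zero_of_mul_eq_zero_of_tripotent (hcubic_col i j l hjl) hcol
      (hhalf c (l, i) (l, i))⟩

/-- In a unital `*`-algebra generated by self-adjoint elements `u_{ij}` forming
an orthogonal matrix, the half-commutation relations `abc = cba` together with
the cubic relations imply the ultracubic relations `a c b = 0` for all `a ≠ b`
on the same row or column of `u` and every generator `c`. -/
theorem halfComm_cubic_imp_ultracubic {A : Type*} [Ring A] [StarRing A] {n : ℕ}
    (u : Fin n → Fin n → A)
    (hsa : ∀ i j, star (u i j) = u i j)
    (horth_row : ∀ i j, ∑ m, u i m * u j m = if i = j then (1 : A) else 0)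
    (horth_col : ∀ i j, ∑ m, u m i * u m j = if i = j then (1 : A) else 0)
    (hcubic_row : ∀ i j k, j ≠ k → u i j * u i k = 0)
    (hcubic_col : ∀ i j k, j ≠ k → u j i * u k i = 0)
    (hhalf : ∀ a b c : Fin n × Fin n,
      u a.1 a.2 * u b.1 b.2 * u c.1 c.2 = u c.1 c.2 * u b.1 b.2 * u a.1 a.2) :
    ∀ (i j l : Fin n) (c : Fin n × Fin n), j ≠ l →
      u i j * u c.1 c.2 * u i l = 0 ∧ u j i * u c.1 c.2 * u l i = 0 :=
  halfComm_cubic_imp_ultracubic_general u horth_row horth_col hcubic_row hcubic_col hhalf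
end

section
/- For n ≥ 1 and the symmetric group S_n acting on ℂ^n by permutation matrices, the space of fixed vectors of the k-fold tensor power of the permutation representation has dimension equal to the number of partitions of {1,...,k} into at most n blocks; in particular for n ≥ k it equals the Bell number B_k. -/
/-! A function of tuples `t : Fin k → Fin n` is `S_n`-invariant iff it depends only on the
orbit of `t`, and two tuples lie in one orbit iff they induce the same partition of `Fin k` into
fibres: the permutation is any extension of the bijection between their ranges. The partitions
arising this way are exactly those with at most `n` blocks, so the fixed space is the space of
all functions on that set of partitions. -/

/-- The fixed vectors of the `k`-fold tensor power of the permutation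
representation of `S_n` on `ℂ^n`.  Here `(ℂ^n)^{⊗k}` is identified with the
functions `(Fin k → Fin n) → ℂ` (coordinates in the basis
`e_{t(1)} ⊗ ⋯ ⊗ e_{t(k)}`), and `σ ∈ S_n` acts by permuting the basis vectors
of each tensor factor. -/
noncomputable def FixSub (n k : ℕ) : Submodule ℂ ((Fin k → Fin n) → ℂ) where
  carrier := {f | ∀ σ : Equiv.Perm (Fin n), ∀ t : Fin k → Fin n, f (σ ∘ t) = f t}
  add_mem' := by
    intro f g hf hg σ t
    simp only [Pi.add_apply, hf σ t, hg σ t]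
  zero_mem' := by intro σ t; rfl
  smul_mem' := by
    intro c f hf σ t
    simp only [Pi.smul_apply, hf σ t]

open Function

theorem LinearMap.mem_range_funLeft_iff {R M X Y : Type*} [Semiring R] [AddCommMonoid M]
    [Module R M] {q : X → Y} (hq : Surjective q) {f : X → M} :
    f ∈ range (funLeft R M q) ↔ ∀ x x', q x = q x' → f x = f x' := by
  refine ⟨?_, fun hf => ⟨f ∘ surjInv hq, funext fun x => hf _ _ (surjInv_eq hq (q x))⟩⟩
  rintro ⟨g, rfl⟩ x x' hxx'
  simp [funLeft_apply, hxx']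

namespace Setoid

variable {α β : Type*}

theorem ker_comp_of_injective {γ : Type*} {g : β → γ} (hg : Injective g) (f : α → β) :
    ker (g ∘ f) = ker f := by
  ext
  simp only [ker_def, comp_apply, hg.eq_iff]

theorem ncard_classes_eq_card_quotient (r : Setoid α) : r.classes.ncard = Nat.card (Quotient r) :=
  (Nat.card_coe_set_eq _).symm.trans (Nat.card_congr r.quotientEquivClasses).symm

theorem ncard_classes_le [Finite α] (r : Setoid α) : r.classes.ncard ≤ Nat.card α := by
  rw [ncard_classes_eq_card_quotient]
  exact Nat.card_le_card_of_surjective _ Quotient.mk_surjective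

theorem ncard_classes_ker_le [Finite β] (f : α → β) :
    (ker f).classes.ncard ≤ Nat.card β := by
  rw [ncard_classes_eq_card_quotient, Nat.card_congr (quotientKerEquivRange f)]
  exact Finite.card_le_of_embedding (Embedding.subtype _)

theorem exists_ker_eq_of_ncard_classes_le [Finite α] [Finite β] (r : Setoid α)
    (hr : r.classes.ncard ≤ Nat.card β) : ∃ f : α → β, ker f = r := by
  have := Fintype.ofFinite (Quotient r)
  have := Fintype.ofFinite β
  rw [ncard_classes_eq_card_quotient, Nat.card_eq_fintype_card, Nat.card_eq_fintype_card] at hr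
  obtain ⟨e⟩ := Embedding.nonempty_of_card_le hr
  refine ⟨e ∘ Quotient.mk r, ?_⟩
  rw [ker_comp_of_injective e.injective]
  exact ker_mk_eq r

theorem exists_perm_comp_eq_iff_ker_eq [Finite β] {f g : α → β} :
    (∃ σ : Equiv.Perm β, σ ∘ f = g) ↔ ker f = ker g := by
  classical
  constructor
  · rintro ⟨σ, rfl⟩
    exact (ker_comp_of_injective σ.injective f).symm
  intro h
  let e : Set.range f ≃ Set.range g := (quotientKerEquivRange f).symm.trans
    ((Quotient.congrRight (Setoid.ext_iff.1 h)).trans (quotientKerEquivRange g))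
  refine ⟨e.extendSubtype, funext fun x => ?_⟩
  rw [comp_apply, e.extendSubtype_apply_of_mem _ ⟨x, rfl⟩]
  have : (quotientKerEquivRange f).symm ⟨f x, x, rfl⟩ = Quotient.mk _ x := by
    rw [Equiv.symm_apply_eq]; rfl
  simp only [e, Equiv.trans_apply, this]
  rfl

def kerPartition [Finite β] (f : α → β) : {r : Setoid α // r.classes.ncard ≤ Nat.card β} :=
  ⟨ker f, ncard_classes_ker_le f⟩

theorem kerPartition_surjective [Finite α] [Finite β] :
    Surjective (kerPartition (α := α) (β := β)) := by
  rintro ⟨r, hr⟩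
  obtain ⟨f, hf⟩ := exists_ker_eq_of_ncard_classes_le r hr
  exact ⟨f, Subtype.ext hf⟩

end Setoid

open Setoid LinearMap in
theorem fixSub_eq_range_funLeft_kerPartition (n k : ℕ) :
    FixSub n k = range (funLeft ℂ ℂ (kerPartition : (Fin k → Fin n) → _)) := by
  ext f
  rw [mem_range_funLeft_iff kerPartition_surjective]
  simp only [kerPartition, Subtype.mk.injEq, ← exists_perm_comp_eq_iff_ker_eq]
  constructor
  · rintro hf t _ ⟨σ, rfl⟩
    exact (hf σ t).symm
  · exact fun hf σ t => (hf t _ ⟨σ, rfl⟩).symm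

theorem finrank_fixed_points_tensor_power_general (n k : ℕ) :
    Module.finrank ℂ (FixSub n k)
      = Set.ncard {s : Setoid (Fin k) | s.classes.ncard ≤ n} ∧
    (k ≤ n → Module.finrank ℂ (FixSub n k)
      = Set.ncard (Set.univ : Set (Setoid (Fin k)))) := by
  have hq := Setoid.kerPartition_surjective (α := Fin k) (β := Fin n)
  have := Finite.of_surjective _ hq
  have := Fintype.ofFinite {r : Setoid (Fin k) // r.classes.ncard ≤ Nat.card (Fin n)}
  have hfin :
      Module.finrank ℂ (FixSub n k) = Set.ncard {s : Setoid (Fin k) | s.classes.ncard ≤ n} := by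
    rw [fixSub_eq_range_funLeft_kerPartition, LinearMap.finrank_range_of_inj
      (LinearMap.funLeft_injective_of_surjective _ _ _ hq), Module.finrank_fintype_fun_eq_card,
      ← Nat.card_eq_fintype_card, ← Nat.card_coe_set_eq, Nat.card_fin]
    rfl
  refine ⟨hfin, fun hkn => hfin.trans (congrArg Set.ncard ?_)⟩
  exact Set.eq_univ_of_forall fun s => s.ncard_classes_le.trans (by simpa using hkn)

/-- The dimension of the space of fixed vectors of the `k`-fold tensor power of
the permutation representation of `S_n` equals the number of partitions of
`{1,…,k}` into at most `n` blocks; in particular for `n ≥ k` it equals the Bell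
number `B_k`, the number of all partitions of `{1,…,k}`. -/
theorem finrank_fixed_points_tensor_power (n k : ℕ) (hn : 1 ≤ n) :
    Module.finrank ℂ (FixSub n k)
      = Set.ncard {s : Setoid (Fin k) | s.classes.ncard ≤ n} ∧
    (k ≤ n → Module.finrank ℂ (FixSub n k)
      = Set.ncard (Set.univ : Set (Setoid (Fin k)))) :=
  finrank_fixed_points_tensor_power_general n k
end
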